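/- arXiv:2010.11440 — 4 statements merged into one kernel-verified Lean document; each statement's English description precedes it below -/
import Mathlib

section
/- Let G be a connected almost bipartite permutation graph. Then every hole in G is a dominating set of G. -/
open SimpleGraph

/-- `c` is a hole (induced cycle on at least 5 vertices) in `G`:
the images of consecutive indices are adjacent, and these are the only adjacencies. -/
def IsHoleEmb {V : Type*} (G : SimpleGraph V) (n : ℕ) (c : ZMod n → V) : Prop :=
  5 ≤ n ∧ Function.Injective c ∧
    ∀ i j : ZMod n, G.Adj (c i) (c j) ↔ (j = i + 1 ∨ i = j + 1)

/-- The triangle `K₃`. -/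
def graphK3 : SimpleGraph (Fin 3) := ⊤

/-- `T₂`: the star `K_{1,3}` with every edge subdivided once. -/
def graphT2 : SimpleGraph (Fin 7) :=
  SimpleGraph.fromRel (fun i j =>
    (i, j) ∈ [((0 : Fin 7), (1 : Fin 7)), (0, 2), (0, 3), (1, 4), (2, 5), (3, 6)])

/-- `X₂`: a 4-cycle `0 1 2 3` with pendant vertices `4, 5, 6` attached at `0, 1, 2`. -/
def graphX2 : SimpleGraph (Fin 7) :=
  SimpleGraph.fromRel (fun i j =>
    (i, j) ∈ [((0 : Fin 7), (1 : Fin 7)), (1, 2), (2, 3), (3, 0), (0, 4), (1, 5), (2, 6)])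

/-- `X₃`: a path `0 1 2 3 4`, a vertex `5` adjacent to `0, 2, 4`, and a pendant `6` at `5`. -/
def graphX3 : SimpleGraph (Fin 7) :=
  SimpleGraph.fromRel (fun i j =>
    (i, j) ∈ [((0 : Fin 7), (1 : Fin 7)), (1, 2), (2, 3), (3, 4), (5, 0), (5, 2), (5, 4), (5, 6)])

/-- The cycle `C_n` on `ZMod n`. -/
def cycleG (n : ℕ) : SimpleGraph (ZMod n) :=
  SimpleGraph.fromRel (fun i j => j = i + 1)

/-- `G` contains an induced copy of `H`. -/
def ContainsInduced {W V : Type*} (H : SimpleGraph W) (G : SimpleGraph V) : Prop :=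
  Nonempty (H ↪g G)

/-- An almost bipartite permutation graph: no induced `K₃`, `T₂`, `X₂`, `X₃`,
nor `C_k` for `k ∈ {5,…,9}`. -/
def AlmostBPG {V : Type*} (G : SimpleGraph V) : Prop :=
  ¬ ContainsInduced graphK3 G ∧ ¬ ContainsInduced graphT2 G ∧
    ¬ ContainsInduced graphX2 G ∧ ¬ ContainsInduced graphX3 G ∧
    ∀ k : ℕ, 5 ≤ k → k ≤ 9 → ¬ ContainsInduced (cycleG k) G

/-- `c` is a shortest hole in `G`. -/
def ShortestHole {V : Type*} (G : SimpleGraph V) (m : ℕ) (c : ZMod m → V) : Prop :=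
  IsHoleEmb G m c ∧ ∀ (n : ℕ) (c' : ZMod n → V), IsHoleEmb G n c' → m ≤ n

/-- `A_i = {v : N(v) ∩ C = {c_{i-1}, c_{i+1}}}`. -/
def Ai {V : Type*} (G : SimpleGraph V) (m : ℕ) (c : ZMod m → V) (i : ZMod m) : Set V :=
  {v | G.neighborSet v ∩ Set.range c = {c (i - 1), c (i + 1)}}

/-- `B_i = {v : N(v) ∩ C = {c_i}}`. -/
def Bi {V : Type*} (G : SimpleGraph V) (m : ℕ) (c : ZMod m → V) (i : ZMod m) : Set V :=
  {v | G.neighborSet v ∩ Set.range c = {c i}}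

/-- `A[i,j] = A_i ∪ B_{i+1} ∪ A_{i+2} ∪ …` for integers `i ≤ j`. -/
def Ablk {V : Type*} (G : SimpleGraph V) (m : ℕ) (c : ZMod m → V) (i j : ℤ) : Set V :=
  {v | ∃ k : ℤ, i ≤ k ∧ k ≤ j ∧
    ((Even (k - i) ∧ v ∈ Ai G m c (k : ZMod m)) ∨ (Odd (k - i) ∧ v ∈ Bi G m c (k : ZMod m)))}

/-- `B[i,j] = B_i ∪ A_{i+1} ∪ B_{i+2} ∪ …` for integers `i ≤ j`. -/
def Bblk {V : Type*} (G : SimpleGraph V) (m : ℕ) (c : ZMod m → V) (i j : ℤ) : Set V :=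
  {v | ∃ k : ℤ, i ≤ k ∧ k ≤ j ∧
    ((Even (k - i) ∧ v ∈ Bi G m c (k : ZMod m)) ∨ (Odd (k - i) ∧ v ∈ Ai G m c (k : ZMod m)))}

/-- `V[i,j] = A[i,j] ∪ B[i,j]`. -/
def Vblk {V : Type*} (G : SimpleGraph V) (m : ℕ) (c : ZMod m → V) (i j : ℤ) : Set V :=
  Ablk G m c i j ∪ Bblk G m c i j

/-- The relation `<_{A_i}`. -/
def ltA {V : Type*} (G : SimpleGraph V) (m : ℕ) (c : ZMod m → V) (i : ZMod m)
    (u u' : V) : Prop :=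
  (∃ w ∈ Bi G m c (i - 2) ∪ Ai G m c (i - 1), G.Adj w u ∧ ¬ G.Adj w u') ∨
  (∃ w ∈ Ai G m c (i + 1) ∪ Bi G m c (i + 2), G.Adj w u' ∧ ¬ G.Adj w u)

/-- The relation `<_{B_i}`. -/
def ltB {V : Type*} (G : SimpleGraph V) (m : ℕ) (c : ZMod m → V) (i : ZMod m)
    (w w' : V) : Prop :=
  (∃ u ∈ Ai G m c (i - 2) ∪ Bi G m c (i - 1), G.Adj u w ∧ ¬ G.Adj u w') ∨
  (∃ u ∈ Bi G m c (i + 1) ∪ Ai G m c (i + 2), G.Adj u w' ∧ ¬ G.Adj u w)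

/-- `r` is a strict linear order on the set `S`. -/
def IsStrictLinearOrderOn {V : Type*} (S : Set V) (r : V → V → Prop) : Prop :=
  (∀ a ∈ S, ¬ r a a) ∧
    (∀ a ∈ S, ∀ b ∈ S, ∀ d ∈ S, r a b → r b d → r a d) ∧
    (∀ a ∈ S, ∀ b ∈ S, a ≠ b → r a b ∨ r b a)

/-- `L` extends `r` on the set `S`. -/
def ExtendsOn {V : Type*} (S : Set V) (r L : V → V → Prop) : Prop :=
  ∀ a ∈ S, ∀ b ∈ S, r a b → L a b

/-- `v` is the maximum of `(S, L)`. -/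
def IsMaxOf {V : Type*} (S : Set V) (L : V → V → Prop) (v : V) : Prop :=
  v ∈ S ∧ ∀ z ∈ S, z ≠ v → L z v

/-- `v` is the minimum of `(S, L)`. -/
def IsMinOf {V : Type*} (S : Set V) (L : V → V → Prop) (v : V) : Prop :=
  v ∈ S ∧ ∀ z ∈ S, z ≠ v → L v z

/-- `v, v'` belong to `S`, `L v v'`, and they are consecutive in `(S, L)`. -/
def ConsecIn {V : Type*} (S : Set V) (L : V → V → Prop) (v v' : V) : Prop :=
  v ∈ S ∧ v' ∈ S ∧ L v v' ∧ ¬ ∃ z ∈ S, L v z ∧ L z v'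

/-- The relation `≺` built from the chosen linear orders `LA i` on `A_i` and `LB i` on `B_i`. -/
def precRel {V : Type*} (G : SimpleGraph V) (m : ℕ) (c : ZMod m → V)
    (LA LB : ZMod m → V → V → Prop) (v v' : V) : Prop :=
  ∃ i : ZMod m,
    ConsecIn (Ai G m c i) (LA i) v v' ∨
    ConsecIn (Bi G m c i) (LB i) v v' ∨
    (IsMaxOf (Ai G m c i) (LA i) v ∧ IsMinOf (Bi G m c (i + 1)) (LB (i + 1)) v') ∨
    (IsMaxOf (Bi G m c i) (LB i) v ∧ IsMinOf (Ai G m c (i + 1)) (LA (i + 1)) v')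

/-- `<_{V'}`: the transitive closure of `≺` restricted to `V'`. -/
def ltOn {V : Type*} (G : SimpleGraph V) (m : ℕ) (c : ZMod m → V)
    (LA LB : ZMod m → V → V → Prop) (V' : Set V) : V → V → Prop :=
  Relation.TransGen (fun a b => a ∈ V' ∧ b ∈ V' ∧ precRel G m c LA LB a b)

/-- The relation `<_cl`. -/
def ltCl {V : Type*} (G : SimpleGraph V) (m : ℕ) (c : ZMod m → V)
    (LA LB : ZMod m → V → V → Prop) (v v' : V) : Prop :=
  ∃ i : ℕ, i < m ∧
    ((v ∈ Ablk G m c ((i : ℤ) - 2) ((i : ℤ) + 2) ∧ v' ∈ Ablk G m c ((i : ℤ) - 2) ((i : ℤ) + 2) ∧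
        ltOn G m c LA LB (Ablk G m c ((i : ℤ) - 2) ((i : ℤ) + 2)) v v') ∨
      (v ∈ Bblk G m c ((i : ℤ) - 2) ((i : ℤ) + 2) ∧ v' ∈ Bblk G m c ((i : ℤ) - 2) ((i : ℤ) + 2) ∧
        ltOn G m c LA LB (Bblk G m c ((i : ℤ) - 2) ((i : ℤ) + 2)) v v'))

/-- `r` is a transitive orientation of `G`. -/
def IsTransOrient {V : Type*} (G : SimpleGraph V) (r : V → V → Prop) : Prop :=
  (∀ v, ¬ r v v) ∧ (∀ a b d, r a b → r b d → r a d) ∧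
    ∀ u v, u ≠ v → ((r u v ∨ r v u) ↔ G.Adj u v)

/-- A permutation graph: both `G` and its complement admit transitive orientations. -/
def IsPermGraph {V : Type*} (G : SimpleGraph V) : Prop :=
  (∃ r, IsTransOrient G r) ∧ ∃ r, IsTransOrient Gᶜ r

/-- A bipartite permutation graph. -/
def IsBPG {V : Type*} (G : SimpleGraph V) : Prop :=
  G.Colorable 2 ∧ IsPermGraph G

/-- `X` is a hole cut of `G`: `G - X` is a bipartite permutation graph. -/
def IsHoleCut {V : Type*} (G : SimpleGraph V) (X : Set V) : Prop :=
  IsBPG (G.induce Xᶜ)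

/-- The adjacency property: for every `u ∈ U`, `N(u)` consists of vertices
consecutive in `(W, r)`. -/
def AdjProperty {V : Type*} (G : SimpleGraph V) (U W : Set V) (r : V → V → Prop) : Prop :=
  ∀ u ∈ U, ∀ w ∈ W, ∀ w' ∈ W, ∀ w'' ∈ W,
    r w w' → r w' w'' → G.Adj u w → G.Adj u w'' → G.Adj u w'

/-- The enclosure property: for `u, u' ∈ U` with `N(u) ⊆ N(u')`, the set `N(u') \ N(u)`
consists of vertices consecutive in `(W, r)`. -/
def EncProperty {V : Type*} (G : SimpleGraph V) (U W : Set V) (r : V → V → Prop) : Prop :=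
  ∀ u ∈ U, ∀ u' ∈ U, G.neighborSet u ∩ W ⊆ G.neighborSet u' ∩ W →
    ∀ w ∈ W, ∀ w' ∈ W, ∀ w'' ∈ W, r w w' → r w' w'' →
      (G.Adj u' w ∧ ¬ G.Adj u w) → (G.Adj u' w'' ∧ ¬ G.Adj u w'') →
        (G.Adj u' w' ∧ ¬ G.Adj u w')

/-- `(U, rU)` and `(W, rW)` form a strong ordering of `U ∪ W`. -/
def StrongOrdering {V : Type*} (G : SimpleGraph V) (U W : Set V)
    (rU rW : V → V → Prop) : Prop :=
  ∀ u ∈ U, ∀ u' ∈ U, ∀ w ∈ W, ∀ w' ∈ W,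
    G.Adj u w' → G.Adj u' w → rU u u' → rW w w' → G.Adj u w ∧ G.Adj u' w'

/-- `S` induces in `G` one of the graphs `K₃, T₂, X₂, X₃, C₅, …, C₉`. -/
def IsForbiddenSet {V : Type*} (G : SimpleGraph V) (S : Set V) : Prop :=
  Nonempty (graphK3 ≃g G.induce S) ∨ Nonempty (graphT2 ≃g G.induce S) ∨
    Nonempty (graphX2 ≃g G.induce S) ∨ Nonempty (graphX3 ≃g G.induce S) ∨
    ∃ k : ℕ, 5 ≤ k ∧ k ≤ 9 ∧ Nonempty (cycleG k ≃g G.induce S)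


section AuxEveryHole

instance graphK3.adjDecidable : DecidableRel graphK3.Adj := fun a b =>
  decidable_of_iff' (a ≠ b) (by rw [graphK3]; exact SimpleGraph.top_adj a b)

instance graphX2.adjDecidable : DecidableRel graphX2.Adj := fun a b =>
  decidable_of_iff' (a ≠ b ∧
    ((a, b) ∈ [((0 : Fin 7), (1 : Fin 7)), (1, 2), (2, 3), (3, 0), (0, 4), (1, 5), (2, 6)] ∨
     (b, a) ∈ [((0 : Fin 7), (1 : Fin 7)), (1, 2), (2, 3), (3, 0), (0, 4), (1, 5), (2, 6)]))
    (by rw [graphX2]; exact SimpleGraph.fromRel_adj _ a b)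

instance graphT2.adjDecidable : DecidableRel graphT2.Adj := fun a b =>
  decidable_of_iff' (a ≠ b ∧
    ((a, b) ∈ [((0 : Fin 7), (1 : Fin 7)), (0, 2), (0, 3), (1, 4), (2, 5), (3, 6)] ∨
     (b, a) ∈ [((0 : Fin 7), (1 : Fin 7)), (0, 2), (0, 3), (1, 4), (2, 5), (3, 6)]))
    (by rw [graphT2]; exact SimpleGraph.fromRel_adj _ a b)

/-- Build a graph embedding from elementwise facts. -/
def mkEmb {W V : Type*} (G : SimpleGraph V) (H : SimpleGraph W) (f : W → V)
    (h1 : ∀ i j, i ≠ j → f i ≠ f j)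
    (h2 : ∀ i j, H.Adj i j → G.Adj (f i) (f j))
    (h3 : ∀ i j, i ≠ j → ¬ H.Adj i j → ¬ G.Adj (f i) (f j)) : H ↪g G :=
  ⟨⟨f, fun {i j} h => by by_contra hne; exact h1 i j hne h⟩, by
    intro i j
    constructor
    · intro h
      by_contra hH
      exact h3 i j (fun e => by subst e; exact G.irrefl h) hH h
    · exact h2 i j⟩

lemma find_edge_aux {V : Type*} (G : SimpleGraph V) (P : V → Prop) :
    ∀ {a b : V}, G.Walk a b → ¬ P a → P b →
      ∃ x y, G.Adj x y ∧ ¬ P x ∧ P y := by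
  intro a b w
  induction w with
  | nil => intro h h'; exact absurd h' h
  | @cons a x b h q ih =>
    intro ha hb
    by_cases hx : P x
    · exact ⟨a, x, h, ha, hx⟩
    · exact ih hx hb

end AuxEveryHole


set_option maxHeartbeats 2000000 in
theorem every_hole_is_dominating {V : Type*} (G : SimpleGraph V)
    (hconn : G.Connected) (hG : AlmostBPG G)
    (n : ℕ) (c : ZMod n → V) (hc : IsHoleEmb G n c) :
    ∀ v : V, v ∉ Set.range c → ∃ w ∈ Set.range c, G.Adj v w := by
  obtain ⟨h5, hinj, hadjC⟩ := hc
  by_contra hcon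
  push_neg at hcon
  obtain ⟨v0, hv0r, hv0n⟩ := hcon
  -- the hole itself is an induced cycle, so n ∉ {5,…,9}, hence 10 ≤ n
  have hcycemb : cycleG n ↪g G := by
    refine mkEmb G (cycleG n) c (fun i j hne h => hne (hinj h)) ?_ ?_
    · intro i j h
      simp only [cycleG, SimpleGraph.fromRel_adj] at h
      exact (hadjC i j).mpr (by tauto)
    · intro i j hne hnc hGc
      refine hnc ?_
      simp only [cycleG, SimpleGraph.fromRel_adj]
      exact ⟨hne, by rcases (hadjC i j).mp hGc with h' | h' <;> tauto⟩
  have h10 : 10 ≤ n := by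
    by_contra hlt
    exact hG.2.2.2.2 n h5 (by omega) ⟨hcycemb⟩
  haveI : NeZero n := ⟨by omega⟩
  -- small numbers are nonzero in ZMod n
  have hz : ∀ k : ℕ, 0 < k → k < n → ((k : ZMod n)) ≠ 0 := by
    intro k hk hkn h
    rw [ZMod.natCast_eq_zero_iff] at h
    exact absurd (Nat.le_of_dvd hk h) (by omega)
  -- adjacency and non-adjacency along the hole
  have hA1 : ∀ i j : ZMod n, j = i + 1 → G.Adj (c i) (c j) :=
    fun i j hj => (hadjC i j).mpr (Or.inl hj)
  have hNA2 : ∀ i j : ZMod n, j = i + 2 → ¬ G.Adj (c i) (c j) := by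
    intro i j hj h
    rcases (hadjC i j).mp h with h' | h'
    · exact hz 1 one_pos (by omega) (by push_cast; linear_combination h' - hj)
    · exact hz 3 (by norm_num) (by omega) (by push_cast; linear_combination -h' - hj)
  have hNA3 : ∀ i j : ZMod n, j = i + 3 → ¬ G.Adj (c i) (c j) := by
    intro i j hj h
    rcases (hadjC i j).mp h with h' | h'
    · exact hz 2 (by norm_num) (by omega) (by push_cast; linear_combination h' - hj)
    · exact hz 4 (by norm_num) (by omega) (by push_cast; linear_combination -h' - hj)
  have hNA4 : ∀ i j : ZMod n, j = i + 4 → ¬ G.Adj (c i) (c j) := by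
    intro i j hj h
    rcases (hadjC i j).mp h with h' | h'
    · exact hz 3 (by norm_num) (by omega) (by push_cast; linear_combination h' - hj)
    · exact hz 5 (by norm_num) (by omega) (by push_cast; linear_combination -h' - hj)
  have hzne : ∀ (i j : ZMod n) (k : ℕ), 0 < k → k < n → j = i + (k : ZMod n) → c i ≠ c j := by
    intro i j k hk hkn hj h
    exact hz k hk hkn (by linear_combination -hj - (hinj h))
  have hNE1 : ∀ i j : ZMod n, j = i + 1 → c i ≠ c j :=
    fun i j hj => hzne i j 1 one_pos (by omega) (by push_cast; exact hj)
  have hNE2 : ∀ i j : ZMod n, j = i + 2 → c i ≠ c j :=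
    fun i j hj => hzne i j 2 (by norm_num) (by omega) (by push_cast; exact hj)
  have hNE3 : ∀ i j : ZMod n, j = i + 3 → c i ≠ c j :=
    fun i j hj => hzne i j 3 (by norm_num) (by omega) (by push_cast; exact hj)
  have hNE4 : ∀ i j : ZMod n, j = i + 4 → c i ≠ c j :=
    fun i j hj => hzne i j 4 (by norm_num) (by omega) (by push_cast; exact hj)
  -- triangle-freeness
  have hTF : ∀ a b x : V, G.Adj a b → G.Adj b x → G.Adj a x → False := by
    intro a b x hab hbx hax
    refine hG.1 ⟨mkEmb G graphK3 ![a, b, x] ?_ ?_ ?_⟩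
    · intro i j hij
      fin_cases i <;> fin_cases j <;>
        first
          | exact absurd rfl hij
          | exact hab.ne | exact hab.ne' | exact hbx.ne | exact hbx.ne'
          | exact hax.ne | exact hax.ne'
    · intro i j h
      fin_cases i <;> fin_cases j <;>
        first
          | (refine absurd h ?_; decide)
          | exact hab | exact hab.symm | exact hbx | exact hbx.symm
          | exact hax | exact hax.symm
    · intro i j hij hH
      fin_cases i <;> fin_cases j <;>
        first
          | exact absurd rfl hij
          | (refine absurd ?_ hH; decide)
  -- find an edge v—u with v non-dominated and u dominated-or-on-cycle
  set P : V → Prop := fun x => x ∈ Set.range c ∨ ∃ w ∈ Set.range c, G.Adj x w with hP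
  have hPa : ¬ P v0 := by
    rintro (h | ⟨w, hw, h⟩)
    · exact hv0r h
    · exact hv0n w hw h
  have hPb : P (c 0) := Or.inl ⟨0, rfl⟩
  obtain ⟨v, u, hvu, hPv, hPu⟩ :=
    find_edge_aux G P ((hconn.preconnected v0 (c 0)).some) hPa hPb
  have hvr : v ∉ Set.range c := fun h => hPv (Or.inl h)
  have hvC : ∀ i, ¬ G.Adj v (c i) := fun i h => hPv (Or.inr ⟨c i, ⟨i, rfl⟩, h⟩)
  have hur : u ∉ Set.range c := fun h => hPv (Or.inr ⟨u, h, hvu⟩)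
  obtain ⟨i0, hui0⟩ : ∃ i, G.Adj u (c i) := by
    rcases hPu with h | ⟨w, ⟨i, rfl⟩, h⟩
    · exact absurd h hur
    · exact ⟨i, h⟩
  by_cases hgap : ∃ j : ZMod n, G.Adj u (c j) ∧ G.Adj u (c (j + 2))
  · -- induced X₂
    obtain ⟨j, huj, huj2⟩ := hgap
    have n13 : ¬ G.Adj u (c (j + 1)) := fun h => hTF u (c j) (c (j + 1)) huj (hA1 _ _ rfl) h
    have n14 : ¬ G.Adj u (c (j - 1)) := fun h => hTF u (c (j - 1)) (c j) h (hA1 _ _ (by ring)) huj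
    have n16 : ¬ G.Adj u (c (j + 3)) :=
      fun h => hTF u (c (j + 2)) (c (j + 3)) huj2 (hA1 _ _ (by ring)) h
    refine hG.2.2.1 ⟨mkEmb G graphX2 ![c j, u, c (j + 2), c (j + 1), c (j - 1), v, c (j + 3)] ?_ ?_ ?_⟩
    · intro i j' hij
      fin_cases i <;> fin_cases j' <;>
        first
          | exact absurd rfl hij
          | (refine hNE1 _ _ ?_; ring1) | (refine Ne.symm (hNE1 _ _ ?_); ring1)
          | (refine hNE2 _ _ ?_; ring1) | (refine Ne.symm (hNE2 _ _ ?_); ring1)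
          | (refine hNE3 _ _ ?_; ring1) | (refine Ne.symm (hNE3 _ _ ?_); ring1)
          | (refine hNE4 _ _ ?_; ring1) | (refine Ne.symm (hNE4 _ _ ?_); ring1)
          | exact fun h => hur ⟨_, h⟩ | exact fun h => hur ⟨_, h.symm⟩
          | exact fun h => hvr ⟨_, h⟩ | exact fun h => hvr ⟨_, h.symm⟩
          | exact hvu.ne | exact hvu.ne'
    · intro i j' h
      fin_cases i <;> fin_cases j' <;>
        first
          | (refine absurd h ?_; decide)
          | exact huj | exact huj.symm | exact huj2 | exact huj2.symm
          | exact hvu | exact hvu.symm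
          | (refine hA1 _ _ ?_; ring1) | (refine SimpleGraph.Adj.symm (hA1 _ _ ?_); ring1)
    · intro i j' hij hH
      fin_cases i <;> fin_cases j' <;>
        first
          | exact absurd rfl hij
          | (refine absurd ?_ hH; decide)
          | (refine hNA2 _ _ ?_; ring1) | (intro h; refine hNA2 _ _ ?_ h.symm; ring1)
          | (refine hNA3 _ _ ?_; ring1) | (intro h; refine hNA3 _ _ ?_ h.symm; ring1)
          | (refine hNA4 _ _ ?_; ring1) | (intro h; refine hNA4 _ _ ?_ h.symm; ring1)
          | exact hvC _ | exact fun h => hvC _ h.symm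
          | exact n13 | exact fun h => n13 h.symm
          | exact n14 | exact fun h => n14 h.symm
          | exact n16 | exact fun h => n16 h.symm
  · -- induced T₂
    push_neg at hgap
    have nu1 : ¬ G.Adj u (c (i0 - 1)) :=
      fun h => hTF u (c (i0 - 1)) (c i0) h (hA1 _ _ (by ring)) hui0
    have nu2 : ¬ G.Adj u (c (i0 + 1)) :=
      fun h => hTF u (c i0) (c (i0 + 1)) hui0 (hA1 _ _ rfl) h
    have nu4 : ¬ G.Adj u (c (i0 - 2)) := by
      intro h
      exact hgap (i0 - 2) h (by rw [show i0 - 2 + 2 = i0 from by ring]; exact hui0)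
    have nu5 : ¬ G.Adj u (c (i0 + 2)) := hgap i0 hui0
    refine hG.2.1 ⟨mkEmb G graphT2
      ![c i0, c (i0 - 1), c (i0 + 1), u, c (i0 - 2), c (i0 + 2), v] ?_ ?_ ?_⟩
    · intro i j' hij
      fin_cases i <;> fin_cases j' <;>
        first
          | exact absurd rfl hij
          | (refine hNE1 _ _ ?_; ring1) | (refine Ne.symm (hNE1 _ _ ?_); ring1)
          | (refine hNE2 _ _ ?_; ring1) | (refine Ne.symm (hNE2 _ _ ?_); ring1)
          | (refine hNE3 _ _ ?_; ring1) | (refine Ne.symm (hNE3 _ _ ?_); ring1)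
          | (refine hNE4 _ _ ?_; ring1) | (refine Ne.symm (hNE4 _ _ ?_); ring1)
          | exact fun h => hur ⟨_, h⟩ | exact fun h => hur ⟨_, h.symm⟩
          | exact fun h => hvr ⟨_, h⟩ | exact fun h => hvr ⟨_, h.symm⟩
          | exact hvu.ne | exact hvu.ne'
    · intro i j' h
      fin_cases i <;> fin_cases j' <;>
        first
          | (refine absurd h ?_; decide)
          | exact hui0 | exact hui0.symm
          | exact hvu | exact hvu.symm
          | (refine hA1 _ _ ?_; ring1) | (refine SimpleGraph.Adj.symm (hA1 _ _ ?_); ring1)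
    · intro i j' hij hH
      fin_cases i <;> fin_cases j' <;>
        first
          | exact absurd rfl hij
          | (refine absurd ?_ hH; decide)
          | (refine hNA2 _ _ ?_; ring1) | (intro h; refine hNA2 _ _ ?_ h.symm; ring1)
          | (refine hNA3 _ _ ?_; ring1) | (intro h; refine hNA3 _ _ ?_ h.symm; ring1)
          | (refine hNA4 _ _ ?_; ring1) | (intro h; refine hNA4 _ _ ?_ h.symm; ring1)
          | exact hvC _ | exact fun h => hvC _ h.symm
          | exact nu1 | exact fun h => nu1 h.symm
          | exact nu2 | exact fun h => nu2 h.symm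
          | exact nu4 | exact fun h => nu4 h.symm
          | exact nu5 | exact fun h => nu5 h.symm
end

section
/- For every vertex v of V, either N(v) ∩ C = {c_i} for some i in {0,...,m-1}, or N(v) ∩ C = {c_i, c_{i+2}} for some i in {0,...,m-1} (indices modulo m). -/
open SimpleGraph

section NbshHelpers

set_option maxHeartbeats 1000000

variable {V : Type*} {G : SimpleGraph V} {m : ℕ} {c : ZMod m → V}

lemma nbsh_castEq (hm : 10 ≤ m) {s t : ℕ} (hs : s < m) (ht : t < m) :
    ((s : ZMod m) = (t : ZMod m)) ↔ s = t := by
  constructor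
  · intro h
    have h2 := congrArg ZMod.val h
    rwa [ZMod.val_cast_of_lt hs, ZMod.val_cast_of_lt ht] at h2
  · rintro rfl; rfl

lemma nbsh_diffNe (hm : 10 ≤ m) {k : ℕ} (h1 : 0 < k) (h2 : k < m) : ((k : ℕ) : ZMod m) ≠ 0 := by
  intro h
  have := (nbsh_castEq hm h2 (by omega : 0 < m)).mp (by simpa using h)
  omega

lemma nbsh_indexNe (hm : 10 ≤ m) {a b : ZMod m} (k : ℕ) (h1 : 0 < k) (h2 : k < m)
    (hk : a + (k : ℕ) = b ∨ b + (k : ℕ) = a) : a ≠ b := by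
  rintro rfl
  rcases hk with h | h <;>
  · have : ((k : ℕ) : ZMod m) = 0 := by linear_combination h
    exact nbsh_diffNe hm h1 h2 this

lemma nbsh_castSub (hm : 10 ≤ m) {k : ℕ} (hk : k ≤ m) : ((m - k : ℕ) : ZMod m) = -(k : ℕ) := by
  apply eq_neg_of_add_eq_zero_left
  rw [← Nat.cast_add, (by omega : m - k + k = m), ZMod.natCast_self]

lemma nbsh_valCast (hm : 10 ≤ m) (k : ZMod m) : ((k.val : ℕ) : ZMod m) = k := by
  haveI : NeZero m := ⟨by omega⟩
  exact (ZMod.natCast_val k).trans (ZMod.cast_id _ _)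

lemma nbsh_cAdj (hC : IsHoleEmb G m c) {a b : ZMod m} (h : b = a + 1) : G.Adj (c a) (c b) :=
  (hC.2.2 a b).mpr (Or.inl h)

lemma nbsh_adjC (hC : IsHoleEmb G m c) (hm : 10 ≤ m) (x : ZMod m) {s t : ℕ}
    (hs : s + 1 < m) (ht : t + 1 < m) :
    G.Adj (c (x + (s:ℕ))) (c (x + (t:ℕ))) ↔ (t = s + 1 ∨ s = t + 1) := by
  rw [hC.2.2]
  constructor
  · rintro (h | h)
    · left
      have h2 : ((t:ℕ) : ZMod m) = ((s+1 : ℕ) : ZMod m) := by push_cast; linear_combination h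
      exact (nbsh_castEq hm (by omega) hs).mp h2
    · right
      have h2 : ((s:ℕ) : ZMod m) = ((t+1 : ℕ) : ZMod m) := by push_cast; linear_combination h
      exact (nbsh_castEq hm (by omega) ht).mp h2
  · rintro (h | h)
    · left; subst h; push_cast; ring
    · right; subst h; push_cast; ring

lemma nbsh_shorter_hole (hC : ShortestHole G m c) (hm : 10 ≤ m) {v : V} (hv : v ∉ Set.range c)
    (i : ZMod m) (d : ℕ) (hd3 : 3 ≤ d) (hdm : d + 2 < m)
    (h0 : G.Adj v (c i)) (hd : G.Adj v (c (i + (d:ℕ))))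
    (hmid : ∀ t : ℕ, 1 ≤ t → t < d → ¬ G.Adj v (c (i + (t:ℕ)))) : False := by
  set n := d + 2 with hn
  haveI : NeZero n := ⟨by omega⟩
  have hvadj : ∀ a : ℕ, a ≤ d → (G.Adj v (c (i + (a:ℕ))) ↔ (a = 0 ∨ a = d)) := by
    intro a ha
    constructor
    · intro h
      by_contra hcon
      push_neg at hcon
      exact hmid a (by omega) (by omega) h
    · rintro (rfl | rfl)
      · simpa using h0
      · exact hd
  have hcinj : ∀ a b : ℕ, a ≤ d → b ≤ d → c (i + (a:ℕ)) = c (i + (b:ℕ)) → a = b := by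
    intro a b ha hb h
    have h2 := hC.1.2.1 h
    have h3 : ((a:ℕ) : ZMod m) = ((b:ℕ) : ZMod m) := by linear_combination h2
    exact (nbsh_castEq hm (by omega) (by omega)).mp h3
  set c' : ZMod n → V := fun k => if k.val ≤ d then c (i + (k.val : ℕ)) else v with hc'
  have hcv : ∀ k : ZMod n, k.val ≤ d → c' k = c (i + (k.val : ℕ)) := by
    intro k hk; simp only [hc', if_pos hk]
  have hcv2 : ∀ k : ZMod n, ¬ (k.val ≤ d) → c' k = v := by
    intro k hk; simp only [hc', if_neg hk]
  have hvlt : ∀ k : ZMod n, k.val < n := fun k => ZMod.val_lt k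
  have hsucc : ∀ k l : ZMod n, l = k + 1 ↔ l.val = (k.val + 1) % n := by
    intro k l
    haveI : Fact (1 < n) := ⟨by omega⟩
    constructor
    · rintro rfl; rw [ZMod.val_add, ZMod.val_one]
    · intro h
      apply ZMod.val_injective
      rw [ZMod.val_add, ZMod.val_one, h]
  have key : IsHoleEmb G n c' := by
    refine ⟨by omega, ?_, ?_⟩
    · intro k l h
      by_cases hk : k.val ≤ d <;> by_cases hl : l.val ≤ d
      · rw [hcv k hk, hcv l hl] at h
        exact ZMod.val_injective _ (hcinj _ _ hk hl h)
      · rw [hcv k hk, hcv2 l hl] at h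
        exact absurd ⟨_, h⟩ hv
      · rw [hcv2 k hk, hcv l hl] at h
        exact absurd ⟨_, h.symm⟩ hv
      · apply ZMod.val_injective
        have := hvlt k; have := hvlt l
        omega
    · intro k l
      rw [hsucc k l, hsucc l k]
      have hk := hvlt k; have hl := hvlt l
      by_cases hkd : k.val ≤ d <;> by_cases hld : l.val ≤ d
      · rw [hcv k hkd, hcv l hld]
        rw [nbsh_adjC hC.1 hm i (by omega) (by omega)]
        constructor
        · rintro (h | h)
          · left; rw [h, Nat.mod_eq_of_lt (by omega)]
          · right; rw [h, Nat.mod_eq_of_lt (by omega)]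
        · rintro (h | h)
          · left; rw [Nat.mod_eq_of_lt (by omega)] at h; omega
          · right; rw [Nat.mod_eq_of_lt (by omega)] at h; omega
      · rw [hcv k hkd, hcv2 l hld]
        have hlv : l.val = d + 1 := by omega
        rw [G.adj_comm, hvadj k.val hkd]
        constructor
        · rintro (h | h)
          · right; rw [h, hlv, (by omega : d + 1 + 1 = n), Nat.mod_self]
          · left; rw [hlv, h, Nat.mod_eq_of_lt (by omega)]
        · rintro (h | h)
          · right; rw [hlv, Nat.mod_eq_of_lt (by omega)] at h; omega
          · left; rw [hlv, (by omega : d + 1 + 1 = n), Nat.mod_self] at h; omega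
      · rw [hcv2 k hkd, hcv l hld]
        have hkv : k.val = d + 1 := by omega
        rw [hvadj l.val hld]
        constructor
        · rintro (h | h)
          · left; rw [h, hkv, (by omega : d + 1 + 1 = n), Nat.mod_self]
          · right; rw [hkv, h, Nat.mod_eq_of_lt (by omega)]
        · rintro (h | h)
          · left; rw [hkv, (by omega : d + 1 + 1 = n), Nat.mod_self] at h; omega
          · right; rw [hkv, Nat.mod_eq_of_lt (by omega)] at h; omega
      · rw [hcv2 k hkd, hcv2 l hld]
        have hkv : k.val = d + 1 := by omega
        have hlv : l.val = d + 1 := by omega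
        constructor
        · intro h; exact (G.irrefl h).elim
        · rintro (h | h)
          · rw [hlv, hkv, (by omega : d + 1 + 1 = n), Nat.mod_self] at h
            exact absurd h (by omega)
          · rw [hkv, hlv, (by omega : d + 1 + 1 = n), Nat.mod_self] at h
            exact absurd h (by omega)
  have := hC.2 n c' key
  omega

lemma nbsh_no_tri (hK : ¬ ContainsInduced graphK3 G) {x y z : V}
    (hxy : G.Adj x y) (hyz : G.Adj y z) (hxz : G.Adj x z) : False := by
  refine hK ⟨⟨⟨![x,y,z], ?_⟩, ?_⟩⟩
  · have h1 := hxy.ne; have h2 := hyz.ne; have h3 := hxz.ne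
    intro a b hab
    fin_cases a <;> fin_cases b <;>
      first | rfl | (exact absurd hab (by assumption)) | (exact absurd hab.symm (by assumption))
  · have i1 := G.irrefl (v := x); have i2 := G.irrefl (v := y); have i3 := G.irrefl (v := z)
    have s1 := hxy.symm; have s2 := hyz.symm; have s3 := hxz.symm
    intro a b
    fin_cases a <;> fin_cases b <;>
      simp only [graphK3, top_adj, Function.Embedding.coeFn_mk, Matrix.cons_val_zero,
        Matrix.cons_val_one, Matrix.head_cons, Matrix.cons_val_two, Matrix.tail_cons] <;>
      first
        | exact iff_of_true (by assumption) (by decide)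
        | exact iff_of_false (by assumption) (by decide)

lemma no_T2 (hK : ¬ ContainsInduced graphT2 G) (x0 x1 x2 x3 x4 x5 x6 : V)
    (a01 : G.Adj x0 x1) (a02 : G.Adj x0 x2) (a03 : G.Adj x0 x3) (a14 : G.Adj x1 x4) (a25 : G.Adj x2 x5) (a36 : G.Adj x3 x6)
    (n04 : ¬ G.Adj x0 x4) (e04 : x0 ≠ x4)
    (n05 : ¬ G.Adj x0 x5) (e05 : x0 ≠ x5)
    (n06 : ¬ G.Adj x0 x6) (e06 : x0 ≠ x6)
    (n12 : ¬ G.Adj x1 x2) (e12 : x1 ≠ x2)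
    (n13 : ¬ G.Adj x1 x3) (e13 : x1 ≠ x3)
    (n15 : ¬ G.Adj x1 x5) (e15 : x1 ≠ x5)
    (n16 : ¬ G.Adj x1 x6) (e16 : x1 ≠ x6)
    (n23 : ¬ G.Adj x2 x3) (e23 : x2 ≠ x3)
    (n24 : ¬ G.Adj x2 x4) (e24 : x2 ≠ x4)
    (n26 : ¬ G.Adj x2 x6) (e26 : x2 ≠ x6)
    (n34 : ¬ G.Adj x3 x4) (e34 : x3 ≠ x4)
    (n35 : ¬ G.Adj x3 x5) (e35 : x3 ≠ x5)
    (n45 : ¬ G.Adj x4 x5) (e45 : x4 ≠ x5)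
    (n46 : ¬ G.Adj x4 x6) (e46 : x4 ≠ x6)
    (n56 : ¬ G.Adj x5 x6) (e56 : x5 ≠ x6) : False := by
  apply hK
  refine ⟨⟨⟨![x0,x1,x2,x3,x4,x5,x6], ?_⟩, ?_⟩⟩
  · have e01 := a01.ne; have e02 := a02.ne; have e03 := a03.ne; have e14 := a14.ne; have e25 := a25.ne; have e36 := a36.ne
    intro a b hab
    fin_cases a <;> fin_cases b <;>
      first | rfl | (exact absurd hab (by assumption)) | (exact absurd hab.symm (by assumption))
  · have i0 := G.irrefl (v := x0); have i1 := G.irrefl (v := x1); have i2 := G.irrefl (v := x2); have i3 := G.irrefl (v := x3); have i4 := G.irrefl (v := x4); have i5 := G.irrefl (v := x5); have i6 := G.irrefl (v := x6); have s01 := a01.symm; have s02 := a02.symm; have s03 := a03.symm; have m04 : ¬ G.Adj x4 x0 := fun h => n04 h.symm; have m05 : ¬ G.Adj x5 x0 := fun h => n05 h.symm; have m06 : ¬ G.Adj x6 x0 := fun h => n06 h.symm; have m12 : ¬ G.Adj x2 x1 := fun h => n12 h.symm; have m13 : ¬ G.Adj x3 x1 := fun h => n13 h.symm; have s14 := a14.symm;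 have m15 : ¬ G.Adj x5 x1 := fun h => n15 h.symm; have m16 : ¬ G.Adj x6 x1 := fun h => n16 h.symm; have m23 : ¬ G.Adj x3 x2 := fun h => n23 h.symm; have m24 : ¬ G.Adj x4 x2 := fun h => n24 h.symm; have s25 := a25.symm; have m26 : ¬ G.Adj x6 x2 := fun h => n26 h.symm; have m34 : ¬ G.Adj x4 x3 := fun h => n34 h.symm; have m35 : ¬ G.Adj x5 x3 := fun h => n35 h.symm; have s36 := a36.symm; have m45 : ¬ G.Adj x5 x4 := fun h => n45 h.symm; have m46 : ¬ G.Adj x6 x4 := fun h => n46 h.symm; have m56 : ¬ G.Adj x6 x5 := fun h => n56 h.symm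
    intro a b
    fin_cases a <;> fin_cases b <;>
      simp only [graphT2, fromRel_adj, Function.Embedding.coeFn_mk, Matrix.cons_val_zero,
        Matrix.cons_val_one, Matrix.head_cons, Matrix.cons_val_two, Matrix.tail_cons,
        Matrix.cons_val_three, Matrix.cons_val_four] <;>
      first
        | exact iff_of_true (by assumption) (by decide)
        | exact iff_of_false (by assumption) (by decide)

lemma no_X2 (hK : ¬ ContainsInduced graphX2 G) (x0 x1 x2 x3 x4 x5 x6 : V)
    (a01 : G.Adj x0 x1) (a03 : G.Adj x0 x3) (a04 : G.Adj x0 x4) (a12 : G.Adj x1 x2) (a15 : G.Adj x1 x5) (a23 : G.Adj x2 x3) (a26 : G.Adj x2 x6)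
    (n02 : ¬ G.Adj x0 x2) (e02 : x0 ≠ x2)
    (n05 : ¬ G.Adj x0 x5) (e05 : x0 ≠ x5)
    (n06 : ¬ G.Adj x0 x6) (e06 : x0 ≠ x6)
    (n13 : ¬ G.Adj x1 x3) (e13 : x1 ≠ x3)
    (n14 : ¬ G.Adj x1 x4) (e14 : x1 ≠ x4)
    (n16 : ¬ G.Adj x1 x6) (e16 : x1 ≠ x6)
    (n24 : ¬ G.Adj x2 x4) (e24 : x2 ≠ x4)
    (n25 : ¬ G.Adj x2 x5) (e25 : x2 ≠ x5)
    (n34 : ¬ G.Adj x3 x4) (e34 : x3 ≠ x4)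
    (n35 : ¬ G.Adj x3 x5) (e35 : x3 ≠ x5)
    (n36 : ¬ G.Adj x3 x6) (e36 : x3 ≠ x6)
    (n45 : ¬ G.Adj x4 x5) (e45 : x4 ≠ x5)
    (n46 : ¬ G.Adj x4 x6) (e46 : x4 ≠ x6)
    (n56 : ¬ G.Adj x5 x6) (e56 : x5 ≠ x6) : False := by
  apply hK
  refine ⟨⟨⟨![x0,x1,x2,x3,x4,x5,x6], ?_⟩, ?_⟩⟩
  · have e01 := a01.ne; have e03 := a03.ne; have e04 := a04.ne; have e12 := a12.ne; have e15 := a15.ne; have e23 := a23.ne; have e26 := a26.ne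
    intro a b hab
    fin_cases a <;> fin_cases b <;>
      first | rfl | (exact absurd hab (by assumption)) | (exact absurd hab.symm (by assumption))
  · have i0 := G.irrefl (v := x0); have i1 := G.irrefl (v := x1); have i2 := G.irrefl (v := x2); have i3 := G.irrefl (v := x3); have i4 := G.irrefl (v := x4); have i5 := G.irrefl (v := x5); have i6 := G.irrefl (v := x6); have s01 := a01.symm; have m02 : ¬ G.Adj x2 x0 := fun h => n02 h.symm; have s03 := a03.symm; have s04 := a04.symm; have m05 : ¬ G.Adj x5 x0 := fun h => n05 h.symm; have m06 : ¬ G.Adj x6 x0 := fun h => n06 h.symm; have s12 := a12.symm; have m13 : ¬ G.Adj x3 x1 := fun h => n13 h.symm; have m14 : ¬ G.Adj x4 x1 := fun h => n14 h.symm; have s15 := a15.symm; have m16 : ¬ G.Adj x6 x1 := fun h => n16 h.symm; have s23 := a23.symm; have m24 : ¬ G.Adj x4 x2 := fun h => n24 h.symm; have m25 : ¬ G.Adj x5 x2 := fun h => n25 h.symm; have s26 := a26.symm; have m34 : ¬ G.Adj x4 x3 := fun h => n34 h.symm; have m35 : ¬ G.Adj x5 x3 := fun h => n35 h.symm; have m36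 : ¬ G.Adj x6 x3 := fun h => n36 h.symm; have m45 : ¬ G.Adj x5 x4 := fun h => n45 h.symm; have m46 : ¬ G.Adj x6 x4 := fun h => n46 h.symm; have m56 : ¬ G.Adj x6 x5 := fun h => n56 h.symm
    intro a b
    fin_cases a <;> fin_cases b <;>
      simp only [graphX2, fromRel_adj, Function.Embedding.coeFn_mk, Matrix.cons_val_zero,
        Matrix.cons_val_one, Matrix.head_cons, Matrix.cons_val_two, Matrix.tail_cons,
        Matrix.cons_val_three, Matrix.cons_val_four] <;>
      first
        | exact iff_of_true (by assumption) (by decide)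
        | exact iff_of_false (by assumption) (by decide)

lemma no_X3 (hK : ¬ ContainsInduced graphX3 G) (x0 x1 x2 x3 x4 x5 x6 : V)
    (a01 : G.Adj x0 x1) (a05 : G.Adj x0 x5) (a12 : G.Adj x1 x2) (a23 : G.Adj x2 x3) (a25 : G.Adj x2 x5) (a34 : G.Adj x3 x4) (a45 : G.Adj x4 x5) (a56 : G.Adj x5 x6)
    (n02 : ¬ G.Adj x0 x2) (e02 : x0 ≠ x2)
    (n03 : ¬ G.Adj x0 x3) (e03 : x0 ≠ x3)
    (n04 : ¬ G.Adj x0 x4) (e04 : x0 ≠ x4)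
    (n06 : ¬ G.Adj x0 x6) (e06 : x0 ≠ x6)
    (n13 : ¬ G.Adj x1 x3) (e13 : x1 ≠ x3)
    (n14 : ¬ G.Adj x1 x4) (e14 : x1 ≠ x4)
    (n15 : ¬ G.Adj x1 x5) (e15 : x1 ≠ x5)
    (n16 : ¬ G.Adj x1 x6) (e16 : x1 ≠ x6)
    (n24 : ¬ G.Adj x2 x4) (e24 : x2 ≠ x4)
    (n26 : ¬ G.Adj x2 x6) (e26 : x2 ≠ x6)
    (n35 : ¬ G.Adj x3 x5) (e35 : x3 ≠ x5)
    (n36 : ¬ G.Adj x3 x6) (e36 : x3 ≠ x6)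
    (n46 : ¬ G.Adj x4 x6) (e46 : x4 ≠ x6) : False := by
  apply hK
  refine ⟨⟨⟨![x0,x1,x2,x3,x4,x5,x6], ?_⟩, ?_⟩⟩
  · have e01 := a01.ne; have e05 := a05.ne; have e12 := a12.ne; have e23 := a23.ne; have e25 := a25.ne; have e34 := a34.ne; have e45 := a45.ne; have e56 := a56.ne
    intro a b hab
    fin_cases a <;> fin_cases b <;>
      first | rfl | (exact absurd hab (by assumption)) | (exact absurd hab.symm (by assumption))
  · have i0 := G.irrefl (v := x0); have i1 := G.irrefl (v := x1); have i2 := G.irrefl (v := x2); have i3 := G.irrefl (v := x3); have i4 := G.irrefl (v := x4); have i5 := G.irrefl (v := x5); have i6 := G.irrefl (v := x6); have s01 := a01.symm; have m02 : ¬ G.Adj x2 x0 := fun h => n02 h.symm; have m03 : ¬ G.Adj x3 x0 := fun h => n03 h.symm; have m04 : ¬ G.Adj x4 x0 := fun h => n04 h.symm; have s05 := a05.symm; have m06 : ¬ G.Adj x6 x0 := fun h => n06 h.symm; have s12 := a12.symm; have m13 : ¬ G.Adj x3 x1 := fun h => n13 h.symm; have m14 : ¬ G.Adj x4 x1 :=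 fun h => n14 h.symm; have m15 : ¬ G.Adj x5 x1 := fun h => n15 h.symm; have m16 : ¬ G.Adj x6 x1 := fun h => n16 h.symm; have s23 := a23.symm; have m24 : ¬ G.Adj x4 x2 := fun h => n24 h.symm; have s25 := a25.symm; have m26 : ¬ G.Adj x6 x2 := fun h => n26 h.symm; have s34 := a34.symm; have m35 : ¬ G.Adj x5 x3 := fun h => n35 h.symm; have m36 : ¬ G.Adj x6 x3 := fun h => n36 h.symm; have s45 := a45.symm; have m46 : ¬ G.Adj x6 x4 := fun h => n46 h.symm; have s56 := a56.symm
    intro a b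
    fin_cases a <;> fin_cases b <;>
      simp only [graphX3, fromRel_adj, Function.Embedding.coeFn_mk, Matrix.cons_val_zero,
        Matrix.cons_val_one, Matrix.head_cons, Matrix.cons_val_two, Matrix.tail_cons,
        Matrix.cons_val_three, Matrix.cons_val_four] <;>
      first
        | exact iff_of_true (by assumption) (by decide)
        | exact iff_of_false (by assumption) (by decide)



lemma nbsh_gap (hC : ShortestHole G m c) (hm : 10 ≤ m)
    (htri : ∀ ⦃x y z : V⦄, G.Adj x y → G.Adj y z → G.Adj x z → False)
    {v : V} (hv : v ∉ Set.range c) {i : ZMod m} (hi : G.Adj v (c i)) :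
    ∃ d : ℕ, (d = 2 ∨ d = m - 2 ∨ d = m) ∧ G.Adj v (c (i + (d:ℕ))) ∧
      ∀ t : ℕ, 1 ≤ t → t < d → ¬ G.Adj v (c (i + (t:ℕ))) := by
  classical
  have hPm : 1 ≤ m ∧ G.Adj v (c (i + ((m:ℕ) : ZMod m))) := by
    refine ⟨by omega, ?_⟩
    rw [ZMod.natCast_self, add_zero]; exact hi
  have hex : ∃ t : ℕ, 1 ≤ t ∧ G.Adj v (c (i + (t:ℕ))) := ⟨m, hPm⟩
  have hd1 : 1 ≤ Nat.find hex := (Nat.find_spec hex).1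
  have hdadj : G.Adj v (c (i + ((Nat.find hex : ℕ) : ZMod m))) := (Nat.find_spec hex).2
  have hdle : Nat.find hex ≤ m := Nat.find_le hPm
  have hmid : ∀ t : ℕ, 1 ≤ t → t < Nat.find hex → ¬ G.Adj v (c (i + (t:ℕ))) := by
    intro t h1 h2 hadj
    exact Nat.find_min hex h2 ⟨h1, hadj⟩
  set d := Nat.find hex with hd
  have hne1 : d ≠ 1 := by
    intro h
    rw [h] at hdadj
    have e1 : G.Adj (c i) (c (i + ((1:ℕ) : ZMod m))) := nbsh_cAdj hC.1 (by push_cast; ring)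
    exact htri hi e1 hdadj
  have hnem1 : d ≠ m - 1 := by
    intro h
    have e2 : i + (((m-1:ℕ) : ℕ) : ZMod m) = i - 1 := by
      rw [nbsh_castSub hm (by omega)]; push_cast; ring
    rw [h, e2] at hdadj
    have e1 : G.Adj (c (i-1)) (c i) := nbsh_cAdj hC.1 (by ring)
    exact htri hdadj e1 hi
  have h5 : d ≤ 2 ∨ m ≤ d + 2 := by
    by_contra hcon
    push_neg at hcon
    exact nbsh_shorter_hole hC hm hv i d (by omega) (by omega) hi hdadj hmid
  exact ⟨d, by omega, hdadj, hmid⟩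

lemma nbsh_only_two (hC : ShortestHole G m c) (hm : 10 ≤ m)
    (htri : ∀ ⦃x y z : V⦄, G.Adj x y → G.Adj y z → G.Adj x z → False)
    {v : V} {i : ZMod m} (hi : G.Adj v (c i))
    (hmid : ∀ t : ℕ, 1 ≤ t → t ≤ m - 3 → ¬ G.Adj v (c (i + (t:ℕ)))) :
    ∀ j, G.Adj v (c j) → j = i ∨ j = i - 2 := by
  haveI : NeZero m := ⟨by omega⟩
  intro j hj
  by_cases hji : j = i
  · exact Or.inl hji
  right
  have htm : (j - i).val < m := ZMod.val_lt _
  have hjt : i + (((j - i).val : ℕ) : ZMod m) = j := by rw [nbsh_valCast hm]; ring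
  have ht1 : 1 ≤ (j - i).val := by
    rcases Nat.eq_zero_or_pos (j - i).val with h | h
    · exfalso
      apply hji
      have h2 : ((((j - i).val : ℕ)) : ZMod m) = 0 := by rw [h]; simp
      rw [nbsh_valCast hm] at h2
      exact sub_eq_zero.mp h2
    · exact h
  by_cases h3 : (j - i).val ≤ m - 3
  · exfalso
    have h4 := hmid _ ht1 h3
    rw [hjt] at h4
    exact h4 hj
  · have hcase : (j - i).val = m - 2 ∨ (j - i).val = m - 1 := by omega
    rcases hcase with h | h
    · rw [← hjt, h, nbsh_castSub hm (by omega)]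
      push_cast; ring
    · exfalso
      have hji1 : j = i - 1 := by
        rw [← hjt, h, nbsh_castSub hm (by omega)]; push_cast; ring
      rw [hji1] at hj
      have e1 : G.Adj (c (i - 1)) (c i) := nbsh_cAdj hC.1 (by ring)
      exact htri hj e1 hi

lemma nbsh_classify (hC : ShortestHole G m c) (hm : 10 ≤ m)
    (hK3n : ¬ ContainsInduced graphK3 G) (hX3n : ¬ ContainsInduced graphX3 G)
    {v : V} (hv : v ∉ Set.range c) {i0 : ZMod m} (h0 : G.Adj v (c i0)) :
    (∃ i, G.Adj v (c i) ∧ ∀ j, G.Adj v (c j) → j = i) ∨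
    (∃ i, G.Adj v (c i) ∧ G.Adj v (c (i + 2)) ∧ ∀ j, G.Adj v (c j) → j = i ∨ j = i + 2) := by
  have htri : ∀ ⦃x y z : V⦄, G.Adj x y → G.Adj y z → G.Adj x z → False :=
    fun x y z h1 h2 h3 => nbsh_no_tri hK3n h1 h2 h3
  obtain ⟨d, hdcase, hdadj, hmid⟩ := nbsh_gap hC hm htri hv h0
  rcases hdcase with rfl | hdm2 | hdm
  · -- d = 2
    have hadj2 : G.Adj v (c (i0 + 2)) := by
      rwa [show i0 + ((2:ℕ) : ZMod m) = i0 + 2 from by push_cast; ring] at hdadj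
    have hnadj1 : ¬ G.Adj v (c (i0 + 1)) := by
      have h := hmid 1 le_rfl (by omega)
      rwa [show i0 + ((1:ℕ) : ZMod m) = i0 + 1 from by push_cast; ring] at h
    obtain ⟨d2, hd2case, hd2adj, hmid2⟩ := nbsh_gap hC hm htri hv hadj2
    rcases hd2case with rfl | hd2m2 | hd2m
    · -- d2 = 2
      have hadj4 : G.Adj v (c (i0 + 4)) := by
        rwa [show i0 + 2 + ((2:ℕ) : ZMod m) = i0 + 4 from by push_cast; ring] at hd2adj
      have hnadj3 : ¬ G.Adj v (c (i0 + 3)) := by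
        have h := hmid2 1 le_rfl (by omega)
        rwa [show i0 + 2 + ((1:ℕ) : ZMod m) = i0 + 3 from by push_cast; ring] at h
      obtain ⟨d3, hd3case, hd3adj, hmid3⟩ := nbsh_gap hC hm htri hv hadj4
      rcases hd3case with rfl | hd3m2 | hd3m
      · -- d3 = 2 : X3 contradiction
        exfalso
        have hadj6 : G.Adj v (c (i0 + 6)) := by
          rwa [show i0 + 4 + ((2:ℕ) : ZMod m) = i0 + 6 from by push_cast; ring] at hd3adj
        have hadj6' : G.Adj v (c (i0 + ((6:ℕ) : ZMod m))) := by
          rwa [show i0 + ((6:ℕ) : ZMod m) = i0 + 6 from by push_cast; ring]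
        have cna : ∀ {s t : ℕ}, s+1 < m → t+1 < m → s+1 ≠ t → t+1 ≠ s →
            ¬ G.Adj (c (i0 + (s:ℕ))) (c (i0 + (t:ℕ))) := fun hs ht h1 h2 had => by
          rcases (nbsh_adjC hC.1 hm i0 hs ht).mp had with h | h <;> omega
        have cne' : ∀ {s t : ℕ}, s < m → t < m → s ≠ t →
            c (i0 + (s:ℕ)) ≠ c (i0 + (t:ℕ)) := fun hs ht hst h =>
          hst ((nbsh_castEq hm hs ht).mp (by linear_combination hC.1.2.1 h))
        have a01 : G.Adj (c (i0 + ((0:ℕ) : ZMod m))) (c (i0 + ((1:ℕ) : ZMod m))) := nbsh_cAdj hC.1 (by push_cast; ring)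
        have n02 : ¬ G.Adj (c (i0 + ((0:ℕ) : ZMod m))) (c (i0 + ((2:ℕ) : ZMod m))) := cna (by omega) (by omega) (by omega) (by omega)
        have e02 : (c (i0 + ((0:ℕ) : ZMod m))) ≠ (c (i0 + ((2:ℕ) : ZMod m))) := cne' (by omega) (by omega) (by omega)
        have n03 : ¬ G.Adj (c (i0 + ((0:ℕ) : ZMod m))) (c (i0 + ((3:ℕ) : ZMod m))) := cna (by omega) (by omega) (by omega) (by omega)
        have e03 : (c (i0 + ((0:ℕ) : ZMod m))) ≠ (c (i0 + ((3:ℕ) : ZMod m))) := cne' (by omega) (by omega) (by omega)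
        have n04 : ¬ G.Adj (c (i0 + ((0:ℕ) : ZMod m))) (c (i0 + ((4:ℕ) : ZMod m))) := cna (by omega) (by omega) (by omega) (by omega)
        have e04 : (c (i0 + ((0:ℕ) : ZMod m))) ≠ (c (i0 + ((4:ℕ) : ZMod m))) := cne' (by omega) (by omega) (by omega)
        have a05 : G.Adj (c (i0 + ((0:ℕ) : ZMod m))) (v) := by rw [show i0 + ((0:ℕ) : ZMod m) = i0 from by push_cast; ring]; exact h0.symm
        have n06 : ¬ G.Adj (c (i0 + ((0:ℕ) : ZMod m))) (c (i0 + ((6:ℕ) : ZMod m))) := cna (by omega) (by omega) (by omega) (by omega)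
        have e06 : (c (i0 + ((0:ℕ) : ZMod m))) ≠ (c (i0 + ((6:ℕ) : ZMod m))) := cne' (by omega) (by omega) (by omega)
        have a12 : G.Adj (c (i0 + ((1:ℕ) : ZMod m))) (c (i0 + ((2:ℕ) : ZMod m))) := nbsh_cAdj hC.1 (by push_cast; ring)
        have n13 : ¬ G.Adj (c (i0 + ((1:ℕ) : ZMod m))) (c (i0 + ((3:ℕ) : ZMod m))) := cna (by omega) (by omega) (by omega) (by omega)
        have e13 : (c (i0 + ((1:ℕ) : ZMod m))) ≠ (c (i0 + ((3:ℕ) : ZMod m))) := cne' (by omega) (by omega) (by omega)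
        have n14 : ¬ G.Adj (c (i0 + ((1:ℕ) : ZMod m))) (c (i0 + ((4:ℕ) : ZMod m))) := cna (by omega) (by omega) (by omega) (by omega)
        have e14 : (c (i0 + ((1:ℕ) : ZMod m))) ≠ (c (i0 + ((4:ℕ) : ZMod m))) := cne' (by omega) (by omega) (by omega)
        have n15 : ¬ G.Adj (c (i0 + ((1:ℕ) : ZMod m))) (v) := by rw [show i0 + ((1:ℕ) : ZMod m) = i0 + 1 from by push_cast; ring]; exact fun h => hnadj1 h.symm
        have e15 : (c (i0 + ((1:ℕ) : ZMod m))) ≠ (v) := fun h => hv ⟨_, h⟩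
        have n16 : ¬ G.Adj (c (i0 + ((1:ℕ) : ZMod m))) (c (i0 + ((6:ℕ) : ZMod m))) := cna (by omega) (by omega) (by omega) (by omega)
        have e16 : (c (i0 + ((1:ℕ) : ZMod m))) ≠ (c (i0 + ((6:ℕ) : ZMod m))) := cne' (by omega) (by omega) (by omega)
        have a23 : G.Adj (c (i0 + ((2:ℕ) : ZMod m))) (c (i0 + ((3:ℕ) : ZMod m))) := nbsh_cAdj hC.1 (by push_cast; ring)
        have n24 : ¬ G.Adj (c (i0 + ((2:ℕ) : ZMod m))) (c (i0 + ((4:ℕ) : ZMod m))) := cna (by omega) (by omega) (by omega) (by omega)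
        have e24 : (c (i0 + ((2:ℕ) : ZMod m))) ≠ (c (i0 + ((4:ℕ) : ZMod m))) := cne' (by omega) (by omega) (by omega)
        have a25 : G.Adj (c (i0 + ((2:ℕ) : ZMod m))) (v) := by rw [show i0 + ((2:ℕ) : ZMod m) = i0 + 2 from by push_cast; ring]; exact hadj2.symm
        have n26 : ¬ G.Adj (c (i0 + ((2:ℕ) : ZMod m))) (c (i0 + ((6:ℕ) : ZMod m))) := cna (by omega) (by omega) (by omega) (by omega)
        have e26 : (c (i0 + ((2:ℕ) : ZMod m))) ≠ (c (i0 + ((6:ℕ) : ZMod m))) := cne' (by omega) (by omega) (by omega)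
        have a34 : G.Adj (c (i0 + ((3:ℕ) : ZMod m))) (c (i0 + ((4:ℕ) : ZMod m))) := nbsh_cAdj hC.1 (by push_cast; ring)
        have n35 : ¬ G.Adj (c (i0 + ((3:ℕ) : ZMod m))) (v) := by rw [show i0 + ((3:ℕ) : ZMod m) = i0 + 3 from by push_cast; ring]; exact fun h => hnadj3 h.symm
        have e35 : (c (i0 + ((3:ℕ) : ZMod m))) ≠ (v) := fun h => hv ⟨_, h⟩
        have n36 : ¬ G.Adj (c (i0 + ((3:ℕ) : ZMod m))) (c (i0 + ((6:ℕ) : ZMod m))) := cna (by omega) (by omega) (by omega) (by omega)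
        have e36 : (c (i0 + ((3:ℕ) : ZMod m))) ≠ (c (i0 + ((6:ℕ) : ZMod m))) := cne' (by omega) (by omega) (by omega)
        have a45 : G.Adj (c (i0 + ((4:ℕ) : ZMod m))) (v) := by rw [show i0 + ((4:ℕ) : ZMod m) = i0 + 4 from by push_cast; ring]; exact hadj4.symm
        have n46 : ¬ G.Adj (c (i0 + ((4:ℕ) : ZMod m))) (c (i0 + ((6:ℕ) : ZMod m))) := cna (by omega) (by omega) (by omega) (by omega)
        have e46 : (c (i0 + ((4:ℕ) : ZMod m))) ≠ (c (i0 + ((6:ℕ) : ZMod m))) := cne' (by omega) (by omega) (by omega)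
        have a56 : G.Adj (v) (c (i0 + ((6:ℕ) : ZMod m))) := hadj6'
        exact no_X3 hX3n (c (i0 + ((0:ℕ) : ZMod m))) (c (i0 + ((1:ℕ) : ZMod m))) (c (i0 + ((2:ℕ) : ZMod m))) (c (i0 + ((3:ℕ) : ZMod m))) (c (i0 + ((4:ℕ) : ZMod m))) (v) (c (i0 + ((6:ℕ) : ZMod m))) a01 a05 a12 a23 a25 a34 a45 a56 n02 e02 n03 e03 n04 e04 n06 e06 n13 e13 n14 e14 n15 e15 n16 e16 n24 e24 n26 e26 n35 e35 n36 e36 n46 e46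
      · -- d3 = m - 2 : contradiction
        exfalso
        have hmid3' : ∀ t : ℕ, 1 ≤ t → t ≤ m - 3 → ¬ G.Adj v (c (i0 + 4 + (t:ℕ))) :=
          fun t a b => hmid3 t a (by omega)
        rcases nbsh_only_two hC hm htri hadj4 hmid3' i0 h0 with h | h
        · exact nbsh_indexNe hm 4 (by omega) (by omega) (Or.inl (by push_cast; ring)) h
        · exact nbsh_indexNe hm 2 (by omega) (by omega) (Or.inl (by push_cast; ring)) h
      · -- d3 = m : contradiction
        exfalso
        have hmid3' : ∀ t : ℕ, 1 ≤ t → t ≤ m - 3 → ¬ G.Adj v (c (i0 + 4 + (t:ℕ))) :=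
          fun t a b => hmid3 t a (by omega)
        rcases nbsh_only_two hC hm htri hadj4 hmid3' i0 h0 with h | h
        · exact nbsh_indexNe hm 4 (by omega) (by omega) (Or.inl (by push_cast; ring)) h
        · exact nbsh_indexNe hm 2 (by omega) (by omega) (Or.inl (by push_cast; ring)) h
    · -- d2 = m - 2 : pair
      have hmid2' : ∀ t : ℕ, 1 ≤ t → t ≤ m - 3 → ¬ G.Adj v (c (i0 + 2 + (t:ℕ))) :=
        fun t a b => hmid2 t a (by omega)
      right
      refine ⟨i0, h0, hadj2, fun j hj => ?_⟩
      rcases nbsh_only_two hC hm htri hadj2 hmid2' j hj with h | h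
      · right; exact h
      · left; rw [h]; ring
    · -- d2 = m : pair
      have hmid2' : ∀ t : ℕ, 1 ≤ t → t ≤ m - 3 → ¬ G.Adj v (c (i0 + 2 + (t:ℕ))) :=
        fun t a b => hmid2 t a (by omega)
      right
      refine ⟨i0, h0, hadj2, fun j hj => ?_⟩
      rcases nbsh_only_two hC hm htri hadj2 hmid2' j hj with h | h
      · right; exact h
      · left; rw [h]; ring
  · -- d = m - 2 : pair at i0 - 2
    rw [hdm2] at hdadj
    have hadjm2 : G.Adj v (c (i0 - 2)) := by
      rwa [show i0 + (((m - 2 : ℕ) : ℕ) : ZMod m) = i0 - 2 from by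
        rw [nbsh_castSub hm (by omega)]; push_cast; ring] at hdadj
    have hmid' : ∀ t : ℕ, 1 ≤ t → t ≤ m - 3 → ¬ G.Adj v (c (i0 + (t:ℕ))) :=
      fun t a b => hmid t a (by omega)
    right
    refine ⟨i0 - 2, hadjm2, by rwa [show i0 - 2 + 2 = i0 from by ring], fun j hj => ?_⟩
    rcases nbsh_only_two hC hm htri h0 hmid' j hj with h | h
    · right; rw [h]; ring
    · left; exact h
  · -- d = m : singleton
    left
    refine ⟨i0, h0, fun j hj => ?_⟩
    have hmid' : ∀ t : ℕ, 1 ≤ t → t ≤ m - 3 → ¬ G.Adj v (c (i0 + (t:ℕ))) :=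
      fun t a b => hmid t a (by omega)
    rcases nbsh_only_two hC hm htri h0 hmid' j hj with h | h
    · exact h
    · exfalso
      have h2 := hmid (m - 2) (by omega) (by omega)
      rw [show i0 + (((m - 2 : ℕ) : ℕ) : ZMod m) = i0 - 2 from by
        rw [nbsh_castSub hm (by omega)]; push_cast; ring] at h2
      rw [h] at hj
      exact h2 hj

lemma nbsh_single_set {v : V} {i : ZMod m} (h0 : G.Adj v (c i))
    (hall : ∀ j, G.Adj v (c j) → j = i) :
    G.neighborSet v ∩ Set.range c = {c i} := by
  ext x
  simp only [Set.mem_inter_iff, SimpleGraph.mem_neighborSet, Set.mem_range,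
    Set.mem_singleton_iff]
  constructor
  · rintro ⟨hadj, j, rfl⟩
    rw [hall j hadj]
  · rintro rfl
    exact ⟨h0, i, rfl⟩

lemma nbsh_pair_set {v : V} {i : ZMod m} (h0 : G.Adj v (c i)) (h2 : G.Adj v (c (i+2)))
    (hall : ∀ j, G.Adj v (c j) → j = i ∨ j = i + 2) :
    G.neighborSet v ∩ Set.range c = {c i, c (i+2)} := by
  ext x
  simp only [Set.mem_inter_iff, SimpleGraph.mem_neighborSet, Set.mem_range,
    Set.mem_insert_iff, Set.mem_singleton_iff]
  constructor
  · rintro ⟨hadj, j, rfl⟩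
    rcases hall j hadj with rfl | rfl
    · exact Or.inl rfl
    · exact Or.inr rfl
  · rintro (rfl | rfl)
    · exact ⟨h0, i, rfl⟩
    · exact ⟨h2, i+2, rfl⟩

lemma nbsh_cross_aux {S : Set V} {a b : V} (w : G.Walk a b) :
    a ∉ S → b ∈ S → ∃ x y, x ∉ S ∧ y ∈ S ∧ G.Adj x y := by
  induction w with
  | nil => intro ha hb; exact absurd hb ha
  | @cons u p q h w ih =>
    intro ha hb
    by_cases hp : p ∈ S
    · exact ⟨u, p, ha, hp, h⟩
    · exact ih hp hb

end NbshHelpers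

theorem neighbors_on_shortest_hole {V : Type*} (G : SimpleGraph V) (hconn : G.Connected) (hG : AlmostBPG G)
    (m : ℕ) (c : ZMod m → V) (hm : 10 ≤ m) (hC : ShortestHole G m c) :
    ∀ v : V,
      (∃ i : ZMod m, G.neighborSet v ∩ Set.range c = {c i}) ∨
        ∃ i : ZMod m, G.neighborSet v ∩ Set.range c = {c i, c (i + 2)} := by
  obtain ⟨hK3n, hT2n, hX2n, hX3n, -⟩ := hG
  intro v
  by_cases hvc : v ∈ Set.range c
  · obtain ⟨j, rfl⟩ := hvc
    right
    refine ⟨j - 1, nbsh_pair_set ?_ ?_ ?_⟩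
    · exact (nbsh_cAdj hC.1 (by ring)).symm
    · rw [show j - 1 + 2 = j + 1 from by ring]
      exact nbsh_cAdj hC.1 rfl
    · intro k hk
      rcases (hC.1.2.2 j k).mp hk with h | h
      · right; rw [h]; ring
      · left; rw [h]; ring
  · by_cases hS : ∃ k, G.Adj v (c k)
    · obtain ⟨k0, hk0⟩ := hS
      rcases nbsh_classify hC hm hK3n hX3n hvc hk0 with ⟨i, hi, hall⟩ | ⟨i, h1, h2, hall⟩
      · exact Or.inl ⟨i, nbsh_single_set hi hall⟩
      · exact Or.inr ⟨i, nbsh_pair_set h1 h2 hall⟩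
    · exfalso
      push_neg at hS
      have hvS : v ∉ {z : V | ∃ k, G.Adj z (c k)} := fun hmem => by
        obtain ⟨k, hk⟩ := hmem
        exact hS k hk
      have hc0 : c 0 ∈ {z : V | ∃ k, G.Adj z (c k)} := ⟨1, nbsh_cAdj hC.1 (by ring)⟩
      obtain ⟨w⟩ := hconn v (c 0)
      obtain ⟨x, y, hxS, hyS, hxy⟩ := nbsh_cross_aux w hvS hc0
      have hxA : ∀ k, ¬ G.Adj x (c k) := fun k hk => hxS ⟨k, hk⟩
      have hxnc : x ∉ Set.range c := by
        rintro ⟨l, rfl⟩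
        exact hxA (l + 1) (nbsh_cAdj hC.1 rfl)
      have hync : y ∉ Set.range c := by
        rintro ⟨l, rfl⟩
        exact hxA l hxy
      obtain ⟨k1, hk1⟩ := hyS
      rcases nbsh_classify hC hm hK3n hX3n hync hk1 with ⟨j, hj, hall⟩ | ⟨j, hj1, hj2, hall⟩
      · -- y has a unique neighbor c j on C : T2 configuration
        have hYN : ∀ s : ℕ, s < m → s ≠ 2 → ¬ G.Adj y (c (j - 2 + (s:ℕ))) := by
          intro s hs hs2 hAdj
          have h2 := hall _ hAdj
          have h3 : ((s:ℕ) : ZMod m) = ((2:ℕ) : ZMod m) := by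
            push_cast at h2 ⊢; linear_combination h2
          exact hs2 ((nbsh_castEq hm hs (by omega)).mp h3)
        have cna : ∀ {s t : ℕ}, s+1 < m → t+1 < m → s+1 ≠ t → t+1 ≠ s →
            ¬ G.Adj (c ((j - 2) + (s:ℕ))) (c ((j - 2) + (t:ℕ))) := fun hs ht h1 h2 had => by
          rcases (nbsh_adjC hC.1 hm (j - 2) hs ht).mp had with h | h <;> omega
        have cne' : ∀ {s t : ℕ}, s < m → t < m → s ≠ t →
            c ((j - 2) + (s:ℕ)) ≠ c ((j - 2) + (t:ℕ)) := fun hs ht hst h =>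
          hst ((nbsh_castEq hm hs ht).mp (by linear_combination hC.1.2.1 h))
        have a01 : G.Adj (c ((j - 2) + ((2:ℕ) : ZMod m))) (c ((j - 2) + ((1:ℕ) : ZMod m))) := (nbsh_cAdj hC.1 (by push_cast; ring)).symm
        have a02 : G.Adj (c ((j - 2) + ((2:ℕ) : ZMod m))) (c ((j - 2) + ((3:ℕ) : ZMod m))) := nbsh_cAdj hC.1 (by push_cast; ring)
        have a03 : G.Adj (c ((j - 2) + ((2:ℕ) : ZMod m))) (y) := by rw [show (j - 2) + ((2:ℕ) : ZMod m) = j from by push_cast; ring]; exact hj.symm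
        have n04 : ¬ G.Adj (c ((j - 2) + ((2:ℕ) : ZMod m))) (c ((j - 2) + ((0:ℕ) : ZMod m))) := cna (by omega) (by omega) (by omega) (by omega)
        have e04 : (c ((j - 2) + ((2:ℕ) : ZMod m))) ≠ (c ((j - 2) + ((0:ℕ) : ZMod m))) := cne' (by omega) (by omega) (by omega)
        have n05 : ¬ G.Adj (c ((j - 2) + ((2:ℕ) : ZMod m))) (c ((j - 2) + ((4:ℕ) : ZMod m))) := cna (by omega) (by omega) (by omega) (by omega)
        have e05 : (c ((j - 2) + ((2:ℕ) : ZMod m))) ≠ (c ((j - 2) + ((4:ℕ) : ZMod m))) := cne' (by omega) (by omega) (by omega)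
        have n06 : ¬ G.Adj (c ((j - 2) + ((2:ℕ) : ZMod m))) (x) := fun h => hxA _ h.symm
        have e06 : (c ((j - 2) + ((2:ℕ) : ZMod m))) ≠ (x) := fun h => hxnc ⟨_, h⟩
        have n12 : ¬ G.Adj (c ((j - 2) + ((1:ℕ) : ZMod m))) (c ((j - 2) + ((3:ℕ) : ZMod m))) := cna (by omega) (by omega) (by omega) (by omega)
        have e12 : (c ((j - 2) + ((1:ℕ) : ZMod m))) ≠ (c ((j - 2) + ((3:ℕ) : ZMod m))) := cne' (by omega) (by omega) (by omega)
        have n13 : ¬ G.Adj (c ((j - 2) + ((1:ℕ) : ZMod m))) (y) := fun h => hYN 1 (by omega) (by omega) h.symm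
        have e13 : (c ((j - 2) + ((1:ℕ) : ZMod m))) ≠ (y) := fun h => hync ⟨_, h⟩
        have a14 : G.Adj (c ((j - 2) + ((1:ℕ) : ZMod m))) (c ((j - 2) + ((0:ℕ) : ZMod m))) := (nbsh_cAdj hC.1 (by push_cast; ring)).symm
        have n15 : ¬ G.Adj (c ((j - 2) + ((1:ℕ) : ZMod m))) (c ((j - 2) + ((4:ℕ) : ZMod m))) := cna (by omega) (by omega) (by omega) (by omega)
        have e15 : (c ((j - 2) + ((1:ℕ) : ZMod m))) ≠ (c ((j - 2) + ((4:ℕ) : ZMod m))) := cne' (by omega) (by omega) (by omega)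
        have n16 : ¬ G.Adj (c ((j - 2) + ((1:ℕ) : ZMod m))) (x) := fun h => hxA _ h.symm
        have e16 : (c ((j - 2) + ((1:ℕ) : ZMod m))) ≠ (x) := fun h => hxnc ⟨_, h⟩
        have n23 : ¬ G.Adj (c ((j - 2) + ((3:ℕ) : ZMod m))) (y) := fun h => hYN 3 (by omega) (by omega) h.symm
        have e23 : (c ((j - 2) + ((3:ℕ) : ZMod m))) ≠ (y) := fun h => hync ⟨_, h⟩
        have n24 : ¬ G.Adj (c ((j - 2) + ((3:ℕ) : ZMod m))) (c ((j - 2) + ((0:ℕ) : ZMod m))) := cna (by omega) (by omega) (by omega) (by omega)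
        have e24 : (c ((j - 2) + ((3:ℕ) : ZMod m))) ≠ (c ((j - 2) + ((0:ℕ) : ZMod m))) := cne' (by omega) (by omega) (by omega)
        have a25 : G.Adj (c ((j - 2) + ((3:ℕ) : ZMod m))) (c ((j - 2) + ((4:ℕ) : ZMod m))) := nbsh_cAdj hC.1 (by push_cast; ring)
        have n26 : ¬ G.Adj (c ((j - 2) + ((3:ℕ) : ZMod m))) (x) := fun h => hxA _ h.symm
        have e26 : (c ((j - 2) + ((3:ℕ) : ZMod m))) ≠ (x) := fun h => hxnc ⟨_, h⟩
        have n34 : ¬ G.Adj (y) (c ((j - 2) + ((0:ℕ) : ZMod m))) := fun h => hYN 0 (by omega) (by omega) h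
        have e34 : (y) ≠ (c ((j - 2) + ((0:ℕ) : ZMod m))) := fun h => hync ⟨_, h.symm⟩
        have n35 : ¬ G.Adj (y) (c ((j - 2) + ((4:ℕ) : ZMod m))) := fun h => hYN 4 (by omega) (by omega) h
        have e35 : (y) ≠ (c ((j - 2) + ((4:ℕ) : ZMod m))) := fun h => hync ⟨_, h.symm⟩
        have a36 : G.Adj (y) (x) := hxy.symm
        have n45 : ¬ G.Adj (c ((j - 2) + ((0:ℕ) : ZMod m))) (c ((j - 2) + ((4:ℕ) : ZMod m))) := cna (by omega) (by omega) (by omega) (by omega)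
        have e45 : (c ((j - 2) + ((0:ℕ) : ZMod m))) ≠ (c ((j - 2) + ((4:ℕ) : ZMod m))) := cne' (by omega) (by omega) (by omega)
        have n46 : ¬ G.Adj (c ((j - 2) + ((0:ℕ) : ZMod m))) (x) := fun h => hxA _ h.symm
        have e46 : (c ((j - 2) + ((0:ℕ) : ZMod m))) ≠ (x) := fun h => hxnc ⟨_, h⟩
        have n56 : ¬ G.Adj (c ((j - 2) + ((4:ℕ) : ZMod m))) (x) := fun h => hxA _ h.symm
        have e56 : (c ((j - 2) + ((4:ℕ) : ZMod m))) ≠ (x) := fun h => hxnc ⟨_, h⟩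
        exact no_T2 hT2n (c ((j - 2) + ((2:ℕ) : ZMod m))) (c ((j - 2) + ((1:ℕ) : ZMod m))) (c ((j - 2) + ((3:ℕ) : ZMod m))) (y) (c ((j - 2) + ((0:ℕ) : ZMod m))) (c ((j - 2) + ((4:ℕ) : ZMod m))) (x) a01 a02 a03 a14 a25 a36 n04 e04 n05 e05 n06 e06 n12 e12 n13 e13 n15 e15 n16 e16 n23 e23 n24 e24 n26 e26 n34 e34 n35 e35 n45 e45 n46 e46 n56 e56
      · -- y has neighbors c j, c (j+2) on C : X2 configuration
        have hYN : ∀ s : ℕ, s < m → s ≠ 1 → s ≠ 3 → ¬ G.Adj y (c (j - 1 + (s:ℕ))) := by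
          intro s hs hs1 hs3 hAdj
          rcases hall _ hAdj with h2 | h2
          · refine hs1 ((nbsh_castEq hm hs (by omega)).mp ?_)
            push_cast at h2 ⊢; linear_combination h2
          · refine hs3 ((nbsh_castEq hm hs (by omega)).mp ?_)
            push_cast at h2 ⊢; linear_combination h2
        have cna : ∀ {s t : ℕ}, s+1 < m → t+1 < m → s+1 ≠ t → t+1 ≠ s →
            ¬ G.Adj (c ((j - 1) + (s:ℕ))) (c ((j - 1) + (t:ℕ))) := fun hs ht h1 h2 had => by
          rcases (nbsh_adjC hC.1 hm (j - 1) hs ht).mp had with h | h <;> omega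
        have cne' : ∀ {s t : ℕ}, s < m → t < m → s ≠ t →
            c ((j - 1) + (s:ℕ)) ≠ c ((j - 1) + (t:ℕ)) := fun hs ht hst h =>
          hst ((nbsh_castEq hm hs ht).mp (by linear_combination hC.1.2.1 h))
        have a01 : G.Adj (c ((j - 1) + ((1:ℕ) : ZMod m))) (y) := by rw [show (j - 1) + ((1:ℕ) : ZMod m) = j from by push_cast; ring]; exact hj1.symm
        have n02 : ¬ G.Adj (c ((j - 1) + ((1:ℕ) : ZMod m))) (c ((j - 1) + ((3:ℕ) : ZMod m))) := cna (by omega) (by omega) (by omega) (by omega)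
        have e02 : (c ((j - 1) + ((1:ℕ) : ZMod m))) ≠ (c ((j - 1) + ((3:ℕ) : ZMod m))) := cne' (by omega) (by omega) (by omega)
        have a03 : G.Adj (c ((j - 1) + ((1:ℕ) : ZMod m))) (c ((j - 1) + ((2:ℕ) : ZMod m))) := nbsh_cAdj hC.1 (by push_cast; ring)
        have a04 : G.Adj (c ((j - 1) + ((1:ℕ) : ZMod m))) (c ((j - 1) + ((0:ℕ) : ZMod m))) := (nbsh_cAdj hC.1 (by push_cast; ring)).symm
        have n05 : ¬ G.Adj (c ((j - 1) + ((1:ℕ) : ZMod m))) (x) := fun h => hxA _ h.symm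
        have e05 : (c ((j - 1) + ((1:ℕ) : ZMod m))) ≠ (x) := fun h => hxnc ⟨_, h⟩
        have n06 : ¬ G.Adj (c ((j - 1) + ((1:ℕ) : ZMod m))) (c ((j - 1) + ((4:ℕ) : ZMod m))) := cna (by omega) (by omega) (by omega) (by omega)
        have e06 : (c ((j - 1) + ((1:ℕ) : ZMod m))) ≠ (c ((j - 1) + ((4:ℕ) : ZMod m))) := cne' (by omega) (by omega) (by omega)
        have a12 : G.Adj (y) (c ((j - 1) + ((3:ℕ) : ZMod m))) := by rw [show (j - 1) + ((3:ℕ) : ZMod m) = j + 2 from by push_cast; ring]; exact hj2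
        have n13 : ¬ G.Adj (y) (c ((j - 1) + ((2:ℕ) : ZMod m))) := fun h => hYN 2 (by omega) (by omega) (by omega) h
        have e13 : (y) ≠ (c ((j - 1) + ((2:ℕ) : ZMod m))) := fun h => hync ⟨_, h.symm⟩
        have n14 : ¬ G.Adj (y) (c ((j - 1) + ((0:ℕ) : ZMod m))) := fun h => hYN 0 (by omega) (by omega) (by omega) h
        have e14 : (y) ≠ (c ((j - 1) + ((0:ℕ) : ZMod m))) := fun h => hync ⟨_, h.symm⟩
        have a15 : G.Adj (y) (x) := hxy.symm
        have n16 : ¬ G.Adj (y) (c ((j - 1) + ((4:ℕ) : ZMod m))) := fun h => hYN 4 (by omega) (by omega) (by omega) h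
        have e16 : (y) ≠ (c ((j - 1) + ((4:ℕ) : ZMod m))) := fun h => hync ⟨_, h.symm⟩
        have a23 : G.Adj (c ((j - 1) + ((3:ℕ) : ZMod m))) (c ((j - 1) + ((2:ℕ) : ZMod m))) := (nbsh_cAdj hC.1 (by push_cast; ring)).symm
        have n24 : ¬ G.Adj (c ((j - 1) + ((3:ℕ) : ZMod m))) (c ((j - 1) + ((0:ℕ) : ZMod m))) := cna (by omega) (by omega) (by omega) (by omega)
        have e24 : (c ((j - 1) + ((3:ℕ) : ZMod m))) ≠ (c ((j - 1) + ((0:ℕ) : ZMod m))) := cne' (by omega) (by omega) (by omega)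
        have n25 : ¬ G.Adj (c ((j - 1) + ((3:ℕ) : ZMod m))) (x) := fun h => hxA _ h.symm
        have e25 : (c ((j - 1) + ((3:ℕ) : ZMod m))) ≠ (x) := fun h => hxnc ⟨_, h⟩
        have a26 : G.Adj (c ((j - 1) + ((3:ℕ) : ZMod m))) (c ((j - 1) + ((4:ℕ) : ZMod m))) := nbsh_cAdj hC.1 (by push_cast; ring)
        have n34 : ¬ G.Adj (c ((j - 1) + ((2:ℕ) : ZMod m))) (c ((j - 1) + ((0:ℕ) : ZMod m))) := cna (by omega) (by omega) (by omega) (by omega)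
        have e34 : (c ((j - 1) + ((2:ℕ) : ZMod m))) ≠ (c ((j - 1) + ((0:ℕ) : ZMod m))) := cne' (by omega) (by omega) (by omega)
        have n35 : ¬ G.Adj (c ((j - 1) + ((2:ℕ) : ZMod m))) (x) := fun h => hxA _ h.symm
        have e35 : (c ((j - 1) + ((2:ℕ) : ZMod m))) ≠ (x) := fun h => hxnc ⟨_, h⟩
        have n36 : ¬ G.Adj (c ((j - 1) + ((2:ℕ) : ZMod m))) (c ((j - 1) + ((4:ℕ) : ZMod m))) := cna (by omega) (by omega) (by omega) (by omega)
        have e36 : (c ((j - 1) + ((2:ℕ) : ZMod m))) ≠ (c ((j - 1) + ((4:ℕ) : ZMod m))) := cne' (by omega) (by omega) (by omega)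
        have n45 : ¬ G.Adj (c ((j - 1) + ((0:ℕ) : ZMod m))) (x) := fun h => hxA _ h.symm
        have e45 : (c ((j - 1) + ((0:ℕ) : ZMod m))) ≠ (x) := fun h => hxnc ⟨_, h⟩
        have n46 : ¬ G.Adj (c ((j - 1) + ((0:ℕ) : ZMod m))) (c ((j - 1) + ((4:ℕ) : ZMod m))) := cna (by omega) (by omega) (by omega) (by omega)
        have e46 : (c ((j - 1) + ((0:ℕ) : ZMod m))) ≠ (c ((j - 1) + ((4:ℕ) : ZMod m))) := cne' (by omega) (by omega) (by omega)
        have n56 : ¬ G.Adj (x) (c ((j - 1) + ((4:ℕ) : ZMod m))) := fun h => hxA _ h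
        have e56 : (x) ≠ (c ((j - 1) + ((4:ℕ) : ZMod m))) := fun h => hxnc ⟨_, h.symm⟩
        exact no_X2 hX2n (c ((j - 1) + ((1:ℕ) : ZMod m))) (y) (c ((j - 1) + ((3:ℕ) : ZMod m))) (c ((j - 1) + ((2:ℕ) : ZMod m))) (c ((j - 1) + ((0:ℕ) : ZMod m))) (x) (c ((j - 1) + ((4:ℕ) : ZMod m))) a01 a03 a04 a12 a15 a23 a26 n02 e02 n05 e05 n06 e06 n13 e13 n14 e14 n16 e16 n24 e24 n25 e25 n34 e34 n35 e35 n36 e36 n45 e45 n46 e46 n56 e56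
end

section
/- For every i in {0,...,m-1}, every u in A_i and every w in B_i are adjacent in G. -/
open SimpleGraph

set_option maxHeartbeats 2000000 in
theorem Ai_Bi_complete_adjacency {V : Type*} (G : SimpleGraph V) (hconn : G.Connected) (hG : AlmostBPG G)
    (m : ℕ) (c : ZMod m → V) (hm : 10 ≤ m) (hC : ShortestHole G m c) :
    ∀ i : ZMod m, ∀ u ∈ Ai G m c i, ∀ w ∈ Bi G m c i, G.Adj u w := by
  obtain ⟨⟨hm5, hcinj, hadjC⟩, -⟩ := hC
  intro i u hu w hw
  have hu' : G.neighborSet u ∩ Set.range c = {c (i - 1), c (i + 1)} := hu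
  have hw' : G.neighborSet w ∩ Set.range c = {c i} := hw
  have hdne : ∀ d : ℕ, 0 < d → d < 10 → ((d : ℕ) : ZMod m) ≠ 0 := by
    intro d hd1 hd2 h
    rw [ZMod.natCast_eq_zero_iff] at h
    have := Nat.le_of_dvd hd1 h
    omega
  have h1 : (1 : ZMod m) ≠ 0 := by exact_mod_cast hdne 1 (by norm_num) (by norm_num)
  have h2 : (2 : ZMod m) ≠ 0 := by exact_mod_cast hdne 2 (by norm_num) (by norm_num)
  have h3 : (3 : ZMod m) ≠ 0 := by exact_mod_cast hdne 3 (by norm_num) (by norm_num)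
  have h4 : (4 : ZMod m) ≠ 0 := by exact_mod_cast hdne 4 (by norm_num) (by norm_num)
  have h5 : (5 : ZMod m) ≠ 0 := by exact_mod_cast hdne 5 (by norm_num) (by norm_num)
  have hu_adj : ∀ j, G.Adj u (c j) ↔ (j = i - 1 ∨ j = i + 1) := by
    intro j
    constructor
    · intro h
      have hmem : c j ∈ ({c (i - 1), c (i + 1)} : Set V) := by
        rw [← hu']; exact ⟨h, ⟨j, rfl⟩⟩
      rcases hmem with h' | h'
      · exact Or.inl (hcinj h')
      · exact Or.inr (hcinj h')
    · rintro (rfl | rfl)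
      · have hmem : c (i - 1) ∈ G.neighborSet u ∩ Set.range c := by
          rw [hu']; exact Or.inl rfl
        exact hmem.1
      · have hmem : c (i + 1) ∈ G.neighborSet u ∩ Set.range c := by
          rw [hu']; exact Or.inr rfl
        exact hmem.1
  have hw_adj : ∀ j, G.Adj w (c j) ↔ j = i := by
    intro j
    constructor
    · intro h
      have hmem : c j ∈ ({c i} : Set V) := by
        rw [← hw']; exact ⟨h, ⟨j, rfl⟩⟩
      exact hcinj hmem
    · intro hj
      have hmem : c j ∈ G.neighborSet w ∩ Set.range c := by
        rw [hw', hj]; rfl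
      exact hmem.1
  by_cases huc : u = c i
  · subst huc; exact ((hw_adj i).mpr rfl).symm
  by_contra hnadj
  -- edges of the X2 copy
  have e01 : G.Adj (c (i - 1)) (c i) := (hadjC _ _).mpr (Or.inl (by ring))
  have e12 : G.Adj (c i) (c (i + 1)) := (hadjC _ _).mpr (Or.inl rfl)
  have e23 : G.Adj (c (i + 1)) u := ((hu_adj (i + 1)).mpr (Or.inr rfl)).symm
  have e30 : G.Adj u (c (i - 1)) := (hu_adj (i - 1)).mpr (Or.inl rfl)
  have e04 : G.Adj (c (i - 1)) (c (i - 2)) := (hadjC _ _).mpr (Or.inr (by ring))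
  have e15 : G.Adj (c i) w := ((hw_adj i).mpr rfl).symm
  have e26 : G.Adj (c (i + 1)) (c (i + 2)) := (hadjC _ _).mpr (Or.inl (by ring))
  -- non-edges
  have hCne : ∀ j k : ZMod m, ¬(k = j + 1 ∨ j = k + 1) → ¬ G.Adj (c j) (c k) := by
    intro j k h hadj; exact h ((hadjC j k).mp hadj)
  have n02 : ¬ G.Adj (c (i - 1)) (c (i + 1)) := by
    apply hCne; rintro (h | h) <;>
    first
      | exact h1 (by linear_combination h) | exact h1 (by linear_combination -h)
      | exact h2 (by linear_combination h) | exact h2 (by linear_combination -h)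
      | exact h3 (by linear_combination h) | exact h3 (by linear_combination -h)
      | exact h4 (by linear_combination h) | exact h4 (by linear_combination -h)
      | exact h5 (by linear_combination h) | exact h5 (by linear_combination -h)
  have n06 : ¬ G.Adj (c (i - 1)) (c (i + 2)) := by
    apply hCne; rintro (h | h) <;>
    first
      | exact h1 (by linear_combination h) | exact h1 (by linear_combination -h)
      | exact h2 (by linear_combination h) | exact h2 (by linear_combination -h)
      | exact h3 (by linear_combination h) | exact h3 (by linear_combination -h)
      | exact h4 (by linear_combination h) | exact h4 (by linear_combination -h)
      | exact h5 (by linear_combination h) | exact h5 (by linear_combination -h)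
  have n14 : ¬ G.Adj (c i) (c (i - 2)) := by
    apply hCne; rintro (h | h) <;>
    first
      | exact h1 (by linear_combination h) | exact h1 (by linear_combination -h)
      | exact h2 (by linear_combination h) | exact h2 (by linear_combination -h)
      | exact h3 (by linear_combination h) | exact h3 (by linear_combination -h)
      | exact h4 (by linear_combination h) | exact h4 (by linear_combination -h)
      | exact h5 (by linear_combination h) | exact h5 (by linear_combination -h)
  have n16 : ¬ G.Adj (c i) (c (i + 2)) := by
    apply hCne; rintro (h | h) <;>
    first
      | exact h1 (by linear_combination h) | exact h1 (by linear_combination -h)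
      | exact h2 (by linear_combination h) | exact h2 (by linear_combination -h)
      | exact h3 (by linear_combination h) | exact h3 (by linear_combination -h)
      | exact h4 (by linear_combination h) | exact h4 (by linear_combination -h)
      | exact h5 (by linear_combination h) | exact h5 (by linear_combination -h)
  have n24 : ¬ G.Adj (c (i + 1)) (c (i - 2)) := by
    apply hCne; rintro (h | h) <;>
    first
      | exact h1 (by linear_combination h) | exact h1 (by linear_combination -h)
      | exact h2 (by linear_combination h) | exact h2 (by linear_combination -h)
      | exact h3 (by linear_combination h) | exact h3 (by linear_combination -h)
      | exact h4 (by linear_combination h) | exact h4 (by linear_combination -h)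
      | exact h5 (by linear_combination h) | exact h5 (by linear_combination -h)
  have n46 : ¬ G.Adj (c (i - 2)) (c (i + 2)) := by
    apply hCne; rintro (h | h) <;>
    first
      | exact h1 (by linear_combination h) | exact h1 (by linear_combination -h)
      | exact h2 (by linear_combination h) | exact h2 (by linear_combination -h)
      | exact h3 (by linear_combination h) | exact h3 (by linear_combination -h)
      | exact h4 (by linear_combination h) | exact h4 (by linear_combination -h)
      | exact h5 (by linear_combination h) | exact h5 (by linear_combination -h)
  have n13 : ¬ G.Adj (c i) u := by
    intro h
    rcases (hu_adj i).mp h.symm with h | h <;>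
    first
      | exact h1 (by linear_combination h) | exact h1 (by linear_combination -h)
      | exact h2 (by linear_combination h) | exact h2 (by linear_combination -h)
      | exact h3 (by linear_combination h) | exact h3 (by linear_combination -h)
      | exact h4 (by linear_combination h) | exact h4 (by linear_combination -h)
      | exact h5 (by linear_combination h) | exact h5 (by linear_combination -h)
  have n34 : ¬ G.Adj u (c (i - 2)) := by
    intro h
    rcases (hu_adj (i - 2)).mp h with h | h <;>
    first
      | exact h1 (by linear_combination h) | exact h1 (by linear_combination -h)
      | exact h2 (by linear_combination h) | exact h2 (by linear_combination -h)
      | exact h3 (by linear_combination h) | exact h3 (by linear_combination -h)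
      | exact h4 (by linear_combination h) | exact h4 (by linear_combination -h)
      | exact h5 (by linear_combination h) | exact h5 (by linear_combination -h)
  have n36 : ¬ G.Adj u (c (i + 2)) := by
    intro h
    rcases (hu_adj (i + 2)).mp h with h | h <;>
    first
      | exact h1 (by linear_combination h) | exact h1 (by linear_combination -h)
      | exact h2 (by linear_combination h) | exact h2 (by linear_combination -h)
      | exact h3 (by linear_combination h) | exact h3 (by linear_combination -h)
      | exact h4 (by linear_combination h) | exact h4 (by linear_combination -h)
      | exact h5 (by linear_combination h) | exact h5 (by linear_combination -h)
  have n05 : ¬ G.Adj (c (i - 1)) w := by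
    intro h
    have h := (hw_adj _).mp h.symm
    first
      | exact h1 (by linear_combination h) | exact h1 (by linear_combination -h)
      | exact h2 (by linear_combination h) | exact h2 (by linear_combination -h)
      | exact h3 (by linear_combination h) | exact h3 (by linear_combination -h)
      | exact h4 (by linear_combination h) | exact h4 (by linear_combination -h)
      | exact h5 (by linear_combination h) | exact h5 (by linear_combination -h)
  have n25 : ¬ G.Adj (c (i + 1)) w := by
    intro h
    have h := (hw_adj _).mp h.symm
    first
      | exact h1 (by linear_combination h) | exact h1 (by linear_combination -h)
      | exact h2 (by linear_combination h) | exact h2 (by linear_combination -h)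
      | exact h3 (by linear_combination h) | exact h3 (by linear_combination -h)
      | exact h4 (by linear_combination h) | exact h4 (by linear_combination -h)
      | exact h5 (by linear_combination h) | exact h5 (by linear_combination -h)
  have n45 : ¬ G.Adj (c (i - 2)) w := by
    intro h
    have h := (hw_adj _).mp h.symm
    first
      | exact h1 (by linear_combination h) | exact h1 (by linear_combination -h)
      | exact h2 (by linear_combination h) | exact h2 (by linear_combination -h)
      | exact h3 (by linear_combination h) | exact h3 (by linear_combination -h)
      | exact h4 (by linear_combination h) | exact h4 (by linear_combination -h)
      | exact h5 (by linear_combination h) | exact h5 (by linear_combination -h)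
  have n56 : ¬ G.Adj w (c (i + 2)) := by
    intro h
    have h := (hw_adj _).mp h
    first
      | exact h1 (by linear_combination h) | exact h1 (by linear_combination -h)
      | exact h2 (by linear_combination h) | exact h2 (by linear_combination -h)
      | exact h3 (by linear_combination h) | exact h3 (by linear_combination -h)
      | exact h4 (by linear_combination h) | exact h4 (by linear_combination -h)
      | exact h5 (by linear_combination h) | exact h5 (by linear_combination -h)
  -- distinctness
  have hcne : ∀ j k : ZMod m, j ≠ k → c j ≠ c k := fun j k h hc => h (hcinj hc)
  have d01 : c (i - 1) ≠ c i := hcne _ _ (fun h => by first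
    | exact h1 (by linear_combination h) | exact h1 (by linear_combination -h)
    | exact h2 (by linear_combination h) | exact h2 (by linear_combination -h)
    | exact h3 (by linear_combination h) | exact h3 (by linear_combination -h)
    | exact h4 (by linear_combination h) | exact h4 (by linear_combination -h)
    | exact h5 (by linear_combination h) | exact h5 (by linear_combination -h))
  have d02 : c (i - 1) ≠ c (i + 1) := hcne _ _ (fun h => by first
    | exact h1 (by linear_combination h) | exact h1 (by linear_combination -h)
    | exact h2 (by linear_combination h) | exact h2 (by linear_combination -h)
    | exact h3 (by linear_combination h) | exact h3 (by linear_combination -h)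
    | exact h4 (by linear_combination h) | exact h4 (by linear_combination -h)
    | exact h5 (by linear_combination h) | exact h5 (by linear_combination -h))
  have d04 : c (i - 1) ≠ c (i - 2) := hcne _ _ (fun h => by first
    | exact h1 (by linear_combination h) | exact h1 (by linear_combination -h)
    | exact h2 (by linear_combination h) | exact h2 (by linear_combination -h)
    | exact h3 (by linear_combination h) | exact h3 (by linear_combination -h)
    | exact h4 (by linear_combination h) | exact h4 (by linear_combination -h)
    | exact h5 (by linear_combination h) | exact h5 (by linear_combination -h))
  have d06 : c (i - 1) ≠ c (i + 2) := hcne _ _ (fun h => by first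
    | exact h1 (by linear_combination h) | exact h1 (by linear_combination -h)
    | exact h2 (by linear_combination h) | exact h2 (by linear_combination -h)
    | exact h3 (by linear_combination h) | exact h3 (by linear_combination -h)
    | exact h4 (by linear_combination h) | exact h4 (by linear_combination -h)
    | exact h5 (by linear_combination h) | exact h5 (by linear_combination -h))
  have d12 : c i ≠ c (i + 1) := hcne _ _ (fun h => by first
    | exact h1 (by linear_combination h) | exact h1 (by linear_combination -h)
    | exact h2 (by linear_combination h) | exact h2 (by linear_combination -h)
    | exact h3 (by linear_combination h) | exact h3 (by linear_combination -h)
    | exact h4 (by linear_combination h) | exact h4 (by linear_combination -h)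
    | exact h5 (by linear_combination h) | exact h5 (by linear_combination -h))
  have d14 : c i ≠ c (i - 2) := hcne _ _ (fun h => by first
    | exact h1 (by linear_combination h) | exact h1 (by linear_combination -h)
    | exact h2 (by linear_combination h) | exact h2 (by linear_combination -h)
    | exact h3 (by linear_combination h) | exact h3 (by linear_combination -h)
    | exact h4 (by linear_combination h) | exact h4 (by linear_combination -h)
    | exact h5 (by linear_combination h) | exact h5 (by linear_combination -h))
  have d16 : c i ≠ c (i + 2) := hcne _ _ (fun h => by first
    | exact h1 (by linear_combination h) | exact h1 (by linear_combination -h)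
    | exact h2 (by linear_combination h) | exact h2 (by linear_combination -h)
    | exact h3 (by linear_combination h) | exact h3 (by linear_combination -h)
    | exact h4 (by linear_combination h) | exact h4 (by linear_combination -h)
    | exact h5 (by linear_combination h) | exact h5 (by linear_combination -h))
  have d24 : c (i + 1) ≠ c (i - 2) := hcne _ _ (fun h => by first
    | exact h1 (by linear_combination h) | exact h1 (by linear_combination -h)
    | exact h2 (by linear_combination h) | exact h2 (by linear_combination -h)
    | exact h3 (by linear_combination h) | exact h3 (by linear_combination -h)
    | exact h4 (by linear_combination h) | exact h4 (by linear_combination -h)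
    | exact h5 (by linear_combination h) | exact h5 (by linear_combination -h))
  have d26 : c (i + 1) ≠ c (i + 2) := hcne _ _ (fun h => by first
    | exact h1 (by linear_combination h) | exact h1 (by linear_combination -h)
    | exact h2 (by linear_combination h) | exact h2 (by linear_combination -h)
    | exact h3 (by linear_combination h) | exact h3 (by linear_combination -h)
    | exact h4 (by linear_combination h) | exact h4 (by linear_combination -h)
    | exact h5 (by linear_combination h) | exact h5 (by linear_combination -h))
  have d46 : c (i - 2) ≠ c (i + 2) := hcne _ _ (fun h => by first
    | exact h1 (by linear_combination h) | exact h1 (by linear_combination -h)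
    | exact h2 (by linear_combination h) | exact h2 (by linear_combination -h)
    | exact h3 (by linear_combination h) | exact h3 (by linear_combination -h)
    | exact h4 (by linear_combination h) | exact h4 (by linear_combination -h)
    | exact h5 (by linear_combination h) | exact h5 (by linear_combination -h))
  have d03 : u ≠ c (i - 1) := fun h => G.irrefl (h ▸ e30)
  have d23 : u ≠ c (i + 1) := fun h => G.irrefl (h ▸ e23.symm)
  have d34 : u ≠ c (i - 2) := by
    intro h
    have hadj : G.Adj u (c (i - 3)) := by
      rw [h]; exact (hadjC _ _).mpr (Or.inr (by ring))
    rcases (hu_adj (i - 3)).mp hadj with h | h <;>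
    first
      | exact h1 (by linear_combination h) | exact h1 (by linear_combination -h)
      | exact h2 (by linear_combination h) | exact h2 (by linear_combination -h)
      | exact h3 (by linear_combination h) | exact h3 (by linear_combination -h)
      | exact h4 (by linear_combination h) | exact h4 (by linear_combination -h)
      | exact h5 (by linear_combination h) | exact h5 (by linear_combination -h)
  have d36 : u ≠ c (i + 2) := by
    intro h
    have hadj : G.Adj u (c (i + 3)) := by
      rw [h]; exact (hadjC _ _).mpr (Or.inl (by ring))
    rcases (hu_adj (i + 3)).mp hadj with h | h <;>
    first
      | exact h1 (by linear_combination h) | exact h1 (by linear_combination -h)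
      | exact h2 (by linear_combination h) | exact h2 (by linear_combination -h)
      | exact h3 (by linear_combination h) | exact h3 (by linear_combination -h)
      | exact h4 (by linear_combination h) | exact h4 (by linear_combination -h)
      | exact h5 (by linear_combination h) | exact h5 (by linear_combination -h)
  have d05 : w ≠ c (i - 1) := by
    intro h
    have hadj : G.Adj w (c (i - 2)) := by rw [h]; exact e04
    have h := (hw_adj _).mp hadj
    first
      | exact h1 (by linear_combination h) | exact h1 (by linear_combination -h)
      | exact h2 (by linear_combination h) | exact h2 (by linear_combination -h)
      | exact h3 (by linear_combination h) | exact h3 (by linear_combination -h)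
      | exact h4 (by linear_combination h) | exact h4 (by linear_combination -h)
      | exact h5 (by linear_combination h) | exact h5 (by linear_combination -h)
  have d15 : w ≠ c i := by
    intro h
    have hadj : G.Adj w (c (i + 1)) := by rw [h]; exact e12
    have h := (hw_adj _).mp hadj
    first
      | exact h1 (by linear_combination h) | exact h1 (by linear_combination -h)
      | exact h2 (by linear_combination h) | exact h2 (by linear_combination -h)
      | exact h3 (by linear_combination h) | exact h3 (by linear_combination -h)
      | exact h4 (by linear_combination h) | exact h4 (by linear_combination -h)
      | exact h5 (by linear_combination h) | exact h5 (by linear_combination -h)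
  have d25 : w ≠ c (i + 1) := by
    intro h
    have hadj : G.Adj w (c (i + 2)) := by rw [h]; exact e26
    have h := (hw_adj _).mp hadj
    first
      | exact h1 (by linear_combination h) | exact h1 (by linear_combination -h)
      | exact h2 (by linear_combination h) | exact h2 (by linear_combination -h)
      | exact h3 (by linear_combination h) | exact h3 (by linear_combination -h)
      | exact h4 (by linear_combination h) | exact h4 (by linear_combination -h)
      | exact h5 (by linear_combination h) | exact h5 (by linear_combination -h)
  have d45 : w ≠ c (i - 2) := by
    intro h
    have hadj : G.Adj w (c (i - 1)) := by rw [h]; exact e04.symm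
    have h := (hw_adj _).mp hadj
    first
      | exact h1 (by linear_combination h) | exact h1 (by linear_combination -h)
      | exact h2 (by linear_combination h) | exact h2 (by linear_combination -h)
      | exact h3 (by linear_combination h) | exact h3 (by linear_combination -h)
      | exact h4 (by linear_combination h) | exact h4 (by linear_combination -h)
      | exact h5 (by linear_combination h) | exact h5 (by linear_combination -h)
  have d56 : w ≠ c (i + 2) := by
    intro h
    have hadj : G.Adj w (c (i + 1)) := by rw [h]; exact e26.symm
    have h := (hw_adj _).mp hadj
    first
      | exact h1 (by linear_combination h) | exact h1 (by linear_combination -h)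
      | exact h2 (by linear_combination h) | exact h2 (by linear_combination -h)
      | exact h3 (by linear_combination h) | exact h3 (by linear_combination -h)
      | exact h4 (by linear_combination h) | exact h4 (by linear_combination -h)
      | exact h5 (by linear_combination h) | exact h5 (by linear_combination -h)
  have d35 : u ≠ w := fun h => n25 (h ▸ e23)
  apply hG.2.2.1
  refine ⟨⟨⟨![c (i - 1), c i, c (i + 1), u, c (i - 2), w, c (i + 2)], ?_⟩, ?_⟩⟩
  · intro a b hab
    fin_cases a <;> fin_cases b <;>
    first
      | rfl
      | (simp only [] at hab ⊢
         simp at hab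
         first
           | exact absurd hab d01 | exact absurd hab.symm d01
           | exact absurd hab d02 | exact absurd hab.symm d02
           | exact absurd hab d04 | exact absurd hab.symm d04
           | exact absurd hab d06 | exact absurd hab.symm d06
           | exact absurd hab d12 | exact absurd hab.symm d12
           | exact absurd hab d14 | exact absurd hab.symm d14
           | exact absurd hab d16 | exact absurd hab.symm d16
           | exact absurd hab d24 | exact absurd hab.symm d24
           | exact absurd hab d26 | exact absurd hab.symm d26
           | exact absurd hab d46 | exact absurd hab.symm d46
           | exact absurd hab d03 | exact absurd hab.symm d03
           | exact absurd hab d23 | exact absurd hab.symm d23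
           | exact absurd hab d34 | exact absurd hab.symm d34
           | exact absurd hab d36 | exact absurd hab.symm d36
           | exact absurd hab d05 | exact absurd hab.symm d05
           | exact absurd hab d15 | exact absurd hab.symm d15
           | exact absurd hab d25 | exact absurd hab.symm d25
           | exact absurd hab d45 | exact absurd hab.symm d45
           | exact absurd hab d56 | exact absurd hab.symm d56
           | exact absurd hab d35 | exact absurd hab.symm d35
           | exact absurd hab.symm huc | exact absurd hab huc)
  · intro a b
    fin_cases a <;> fin_cases b <;> simp [graphX2] <;>
    first
      | exact G.irrefl
      | exact e01 | exact e01.symm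
      | exact e12 | exact e12.symm
      | exact e23 | exact e23.symm
      | exact e30 | exact e30.symm
      | exact e04 | exact e04.symm
      | exact e15 | exact e15.symm
      | exact e26 | exact e26.symm
      | exact n02 | exact fun h => n02 h.symm
      | exact n06 | exact fun h => n06 h.symm
      | exact n14 | exact fun h => n14 h.symm
      | exact n16 | exact fun h => n16 h.symm
      | exact n24 | exact fun h => n24 h.symm
      | exact n46 | exact fun h => n46 h.symm
      | exact n13 | exact fun h => n13 h.symm
      | exact n34 | exact fun h => n34 h.symm
      | exact n36 | exact fun h => n36 h.symm
      | exact n05 | exact fun h => n05 h.symm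
      | exact n25 | exact fun h => n25 h.symm
      | exact n45 | exact fun h => n45 h.symm
      | exact n56 | exact fun h => n56 h.symm
      | exact hnadj | exact fun h => hnadj h.symm
end

section
/- For every i in {0,...,m-1} and every u in A_i, it holds that B_i ⊆ N(u) ⊆ B[i-2,i+2]. -/
open SimpleGraph

/-
A vertex `w ∈ B_i` not adjacent to `u` would complete the 4-cycle `c_{i-1} c_i c_{i+1} u`, with
pendants `c_{i-2}, w, c_{i+2}`, to an induced `X₂`.

Let `v ∉ C` be a neighbour of `u`; it misses `c_{i±1}` since `G` is triangle-free. If `v` saw some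
`c_{i+e}` with `3 ≤ e ≤ m - 3`, its first neighbour after `c_{i+1}` would have to be `c_{i+2}`,
since otherwise `u, c_{i+1}, …, c_{i+e'}, v` is a hole shorter than `C`; symmetrically `v` would
see `c_{i-2}`. But between two neighbours of `v` on `C` the next neighbour always comes two steps
later (else there is a triangle or a shorter hole), so `v` would also see `c_{i+4}` and `c_{i+6}`,
and together with the pendant `u` these give an induced `X₃`. Hence `N(v) ∩ C` lies in
`{c_{i-2}, c_i, c_{i+2}}`, does not contain both `c_{i±2}` (same argument), and is nonempty (else
`X₂` again), which puts `v` into one of `B_{i-2}, A_{i-1}, B_i, A_{i+1}, B_{i+2}`.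
-/

section ForbiddenSubgraphs

variable {V : Type*} {G : SimpleGraph V}

instance : DecidableRel graphX2.Adj := fun a b => decidable_of_iff' _ (fromRel_adj _ a b)

instance : DecidableRel graphX3.Adj := fun a b => decidable_of_iff' _ (fromRel_adj _ a b)

/-- Injectivity comes for free when no two vertices of `H` have the same neighbourhood. -/
theorem containsInduced_of_adj_iff {W : Type*} [LinearOrder W] {H : SimpleGraph W} (f : W → V)
    (htwin : ∀ a b, (∀ z, H.Adj z a ↔ H.Adj z b) → a = b)
    (hf : ∀ a b, a < b → (G.Adj (f a) (f b) ↔ H.Adj a b)) : ContainsInduced H G := by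
  have hadj : ∀ a b, G.Adj (f a) (f b) ↔ H.Adj a b := by
    intro a b
    rcases lt_trichotomy a b with hab | rfl | hab
    · exact hf a b hab
    · exact iff_of_false (G.loopless.irrefl _) (H.loopless.irrefl _)
    · rw [G.adj_comm, H.adj_comm]
      exact hf b a hab
  refine ⟨⟨⟨f, fun a b hab => htwin a b fun z => ?_⟩, hadj _ _⟩⟩
  rw [← hadj, ← hadj, hab]

theorem cliqueFree_three_of_not_containsInduced (h : ¬ ContainsInduced graphK3 G) :
    G.CliqueFree 3 :=
  fun s hs => h ⟨topEmbeddingOfNotCliqueFree fun hfree => hfree s hs⟩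

theorem not_adj_of_cliqueFree_three (h : G.CliqueFree 3) {x y z : V} (hxy : G.Adj x y)
    (hxz : G.Adj x z) : ¬ G.Adj y z :=
  fun hyz => isIndepSet_neighborSet_of_triangleFree _ h x hxy hxz hyz.ne hyz

theorem containsInduced_graphX2 {v₀ v₁ v₂ v₃ v₄ v₅ v₆ : V}
    (e01 : G.Adj v₀ v₁) (e12 : G.Adj v₁ v₂) (e23 : G.Adj v₂ v₃) (e03 : G.Adj v₀ v₃)
    (e04 : G.Adj v₀ v₄) (e15 : G.Adj v₁ v₅) (e26 : G.Adj v₂ v₆)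
    (n02 : ¬ G.Adj v₀ v₂) (n05 : ¬ G.Adj v₀ v₅) (n06 : ¬ G.Adj v₀ v₆) (n13 : ¬ G.Adj v₁ v₃)
    (n14 : ¬ G.Adj v₁ v₄) (n16 : ¬ G.Adj v₁ v₆) (n24 : ¬ G.Adj v₂ v₄) (n25 : ¬ G.Adj v₂ v₅)
    (n34 : ¬ G.Adj v₃ v₄) (n35 : ¬ G.Adj v₃ v₅) (n36 : ¬ G.Adj v₃ v₆) (n45 : ¬ G.Adj v₄ v₅)
    (n46 : ¬ G.Adj v₄ v₆) (n56 : ¬ G.Adj v₅ v₆) : ContainsInduced graphX2 G := by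
  refine containsInduced_of_adj_iff ![v₀, v₁, v₂, v₃, v₄, v₅, v₆] (by decide) fun a b hab => ?_
  fin_cases a <;> fin_cases b <;> first
    | exact absurd hab (by decide)
    | exact iff_of_true ‹_› (by decide)
    | exact iff_of_false ‹_› (by decide)

theorem containsInduced_graphX3 {v₀ v₁ v₂ v₃ v₄ v₅ v₆ : V}
    (e01 : G.Adj v₀ v₁) (e12 : G.Adj v₁ v₂) (e23 : G.Adj v₂ v₃) (e34 : G.Adj v₃ v₄)
    (e05 : G.Adj v₀ v₅) (e25 : G.Adj v₂ v₅) (e45 : G.Adj v₄ v₅) (e56 : G.Adj v₅ v₆)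
    (n02 : ¬ G.Adj v₀ v₂) (n03 : ¬ G.Adj v₀ v₃) (n04 : ¬ G.Adj v₀ v₄) (n06 : ¬ G.Adj v₀ v₆)
    (n13 : ¬ G.Adj v₁ v₃) (n14 : ¬ G.Adj v₁ v₄) (n15 : ¬ G.Adj v₁ v₅) (n16 : ¬ G.Adj v₁ v₆)
    (n24 : ¬ G.Adj v₂ v₄) (n26 : ¬ G.Adj v₂ v₆) (n35 : ¬ G.Adj v₃ v₅) (n36 : ¬ G.Adj v₃ v₆)
    (n46 : ¬ G.Adj v₄ v₆) : ContainsInduced graphX3 G := by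
  refine containsInduced_of_adj_iff ![v₀, v₁, v₂, v₃, v₄, v₅, v₆] (by decide) fun a b hab => ?_
  fin_cases a <;> fin_cases b <;> first
    | exact absurd hab (by decide)
    | exact iff_of_true ‹_› (by decide)
    | exact iff_of_false ‹_› (by decide)

end ForbiddenSubgraphs

section HoleSequences

variable {V : Type*} {G : SimpleGraph V}

/-- A hole indexed by `0, …, n - 1` in `ℕ` rather than by `ZMod n`, so that positions along it
are handled by `omega`. -/
structure IsHoleSeq (G : SimpleGraph V) (n : ℕ) (d : ℕ → V) : Prop where
  five_le : 5 ≤ n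
  inj {s t : ℕ} : s < n → t < n → d s = d t → s = t
  adj_iff {s t : ℕ} : s < n → t < n →
    (G.Adj (d s) (d t) ↔ t = s + 1 ∨ s = t + 1 ∨ (s = 0 ∧ t = n - 1) ∨ (t = 0 ∧ s = n - 1))

structure IsInducedPath (G : SimpleGraph V) (w : ℕ → V) (L : ℕ) : Prop where
  inj {s t : ℕ} : s ≤ L → t ≤ L → w s = w t → s = t
  adj_iff {s t : ℕ} : s ≤ L → t ≤ L → (G.Adj (w s) (w t) ↔ t = s + 1 ∨ s = t + 1)

theorem ZMod.add_natCast_eq_add_natCast_iff {n : ℕ} (j : ZMod n) {s t : ℕ} (hs : s < n)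
    (ht : t < n) : j + s = j + t ↔ s = t := by
  rw [add_right_inj, ZMod.natCast_eq_natCast_iff', Nat.mod_eq_of_lt hs, Nat.mod_eq_of_lt ht]

theorem IsHoleSeq.isHoleEmb {n : ℕ} {d : ℕ → V} (h : IsHoleSeq G n d) :
    IsHoleEmb G n (fun x : ZMod n => d x.val) := by
  have h5 := h.five_le
  have : NeZero n := ⟨by omega⟩
  have : Fact (1 < n) := ⟨by omega⟩
  have hsucc (x y : ZMod n) : y = x + 1 ↔ y.val = x.val + 1 ∨ (x.val + 1 = n ∧ y.val = 0) := by
    have := x.val_lt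
    have := y.val_lt
    rw [← (ZMod.val_injective n).eq_iff, ZMod.val_add, ZMod.val_one]
    rcases (show x.val + 1 < n ∨ x.val + 1 = n by omega) with hx | hx
    · rw [Nat.mod_eq_of_lt hx]
      omega
    · rw [hx, Nat.mod_self]
      omega
  refine ⟨h5, fun x y hxy => ZMod.val_injective n (h.inj x.val_lt y.val_lt hxy), fun x y => ?_⟩
  rw [h.adj_iff x.val_lt y.val_lt, hsucc, hsucc]
  have := x.val_lt
  have := y.val_lt
  omega

theorem IsHoleEmb.isHoleSeq_add {n : ℕ} {c : ZMod n → V} (h : IsHoleEmb G n c) (j : ZMod n) :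
    IsHoleSeq G n (fun t => c (j + t)) := by
  obtain ⟨h5, hinj, hadj⟩ := h
  refine ⟨h5, fun hs ht hst => (ZMod.add_natCast_eq_add_natCast_iff j hs ht).1 (hinj hst),
    fun {s t} hs ht => ?_⟩
  have hsucc {a b : ℕ} (ha : a < n) (hb : b < n) :
      j + b = j + a + 1 ↔ b = a + 1 ∨ (a + 1 = n ∧ b = 0) := by
    rw [add_assoc, ← Nat.cast_add_one]
    rcases (show a + 1 < n ∨ a + 1 = n by omega) with h1 | h1
    · rw [ZMod.add_natCast_eq_add_natCast_iff j hb h1]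
      omega
    · rw [show ((a + 1 : ℕ) : ZMod n) = ((0 : ℕ) : ZMod n) by
          rw [h1, ZMod.natCast_self, Nat.cast_zero],
        ZMod.add_natCast_eq_add_natCast_iff j hb (by omega)]
      omega
  rw [hadj, hsucc hs ht, hsucc ht hs]
  omega

/-- The same hole traversed in the opposite direction, still starting at `d 0`. -/
theorem IsHoleSeq.reflect {n : ℕ} {d : ℕ → V} (h : IsHoleSeq G n d) :
    IsHoleSeq G n (fun t => d (if t = 0 then 0 else n - t)) := by
  have h5 := h.five_le
  refine ⟨h5, fun {s t} hs ht hst => ?_, fun {s t} hs ht => ?_⟩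
  · have := h.inj (by split_ifs <;> omega) (by split_ifs <;> omega) hst
    split_ifs at this <;> omega
  · rw [h.adj_iff (by split_ifs <;> omega) (by split_ifs <;> omega)]
    split_ifs <;> (try simp only [false_or, true_and]) <;> omega

theorem IsHoleSeq.isInducedPath {n : ℕ} {d : ℕ → V} (h : IsHoleSeq G n d) {a L : ℕ}
    (haL : a + L < n) (hL : L + 2 ≤ n) : IsInducedPath G (fun t => d (a + t)) L where
  inj hs ht hst := by
    have := h.inj (by omega) (by omega) hst
    omega
  adj_iff hs ht := by
    rw [h.adj_iff (by omega) (by omega)]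
    omega

theorem IsInducedPath.update_inj {w : ℕ → V} {L : ℕ} (h : IsInducedPath G w L) {u : V}
    (hne : ∀ t ≤ L, w t ≠ u) {s t : ℕ} (hs : s ≤ L + 1) (ht : t ≤ L + 1)
    (hst : Function.update w (L + 1) u s = Function.update w (L + 1) u t) : s = t := by
  simp only [Function.update_apply] at hst
  split_ifs at hst with h1 h2 h2
  · omega
  · exact absurd hst.symm (hne t (by omega))
  · exact absurd hst (hne s (by omega))
  · exact h.inj (by omega) (by omega) hst

theorem IsInducedPath.update {w : ℕ → V} {L : ℕ} (h : IsInducedPath G w L) {u : V}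
    (hu : ∀ t ≤ L, G.Adj (w t) u ↔ t = L) (hne : ∀ t ≤ L, w t ≠ u) :
    IsInducedPath G (Function.update w (L + 1) u) (L + 1) := by
  refine ⟨h.update_inj hne, fun {s t} hs ht => ?_⟩
  simp only [Function.update_apply]
  split_ifs with h1 h2 h2
  · exact iff_of_false (G.loopless.irrefl u) (by omega)
  · rw [G.adj_comm, hu t (by omega)]
    omega
  · rw [hu s (by omega)]
    omega
  · exact h.adj_iff (by omega) (by omega)

theorem IsInducedPath.isHoleSeq_update {w : ℕ → V} {L : ℕ} (h : IsInducedPath G w L)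
    (hL : 3 ≤ L) {v : V} (hv : ∀ t ≤ L, G.Adj (w t) v ↔ t = 0 ∨ t = L)
    (hne : ∀ t ≤ L, w t ≠ v) : IsHoleSeq G (L + 2) (Function.update w (L + 1) v) := by
  refine ⟨by omega, fun hs ht => h.update_inj hne (by omega) (by omega), fun {s t} hs ht => ?_⟩
  simp only [Function.update_apply]
  split_ifs with h1 h2 h2
  · exact iff_of_false (G.loopless.irrefl v) (by omega)
  · rw [G.adj_comm, hv t (by omega)]
    omega
  · rw [hv s (by omega)]
    omega
  · rw [h.adj_iff (by omega) (by omega)]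
    omega

end HoleSequences

section ShortestHoleSeq

variable {V : Type*} {G : SimpleGraph V} {m : ℕ} {d : ℕ → V} {u v : V}

theorem IsHoleSeq.eq_zero_of_apply_eq (hd : IsHoleSeq G m d)
    (hu : ∀ t < m, G.Adj (d t) u ↔ t = 1 ∨ t = m - 1) {t : ℕ} (ht : t < m) (h : d t = u) :
    t = 0 := by
  have h5 := hd.five_le
  have h1 := (hu 1 (by omega)).2 (Or.inl rfl)
  have h2 := (hu (m - 1) (by omega)).2 (Or.inr rfl)
  rw [← h, hd.adj_iff (by omega) ht] at h1 h2
  omega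

/-- If not, the first neighbour of `v` after `d s` closes a triangle or a hole shorter than `m`. -/
theorem IsHoleSeq.adj_add_two (hd : IsHoleSeq G m d) (hmin : ∀ n e, IsHoleSeq G n e → m ≤ n)
    (hK3 : G.CliqueFree 3) (hv : ∀ t < m, d t ≠ v) {s t : ℕ} (hs : G.Adj (d s) v)
    (ht : G.Adj (d t) v) (hst : s < t) (htm : t < m) (hgap : t + 3 ≤ m + s) :
    G.Adj (d (s + 2)) v := by
  induction t using Nat.strong_induction_on with
  | _ t ih =>
  by_cases hmid : ∃ r, s < r ∧ r < t ∧ G.Adj (d r) v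
  · obtain ⟨r, hsr, hrt, hr⟩ := hmid
    exact ih r hrt hr hsr (by omega) (by omega)
  push Not at hmid
  rcases (show t = s + 1 ∨ t = s + 2 ∨ s + 3 ≤ t by omega) with rfl | rfl | hgap3
  · exact absurd ((hd.adj_iff (by omega) htm).2 (by omega))
      (not_adj_of_cliqueFree_three hK3 hs.symm ht.symm)
  · exact ht
  · have hclose : ∀ r ≤ t - s, G.Adj (d (s + r)) v ↔ r = 0 ∨ r = t - s := by
      intro r hr
      rcases (show r = 0 ∨ r = t - s ∨ (0 < r ∧ r < t - s) by omega) with rfl | rfl | ⟨hr0, hrt⟩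
      · simpa using hs
      · simpa [show s + (t - s) = t by omega] using ht
      · exact iff_of_false (hmid _ (by omega) (by omega)) (by omega)
    have := hmin _ _ ((hd.isInducedPath (a := s) (L := t - s) (by omega) (by omega)).isHoleSeq_update
      (by omega) hclose fun r _ => hv _ (by omega))
    omega

/-- If not, the first neighbour `d e` of `v` beyond `d 1` closes the hole `u, d 1, …, d e, v`,
shorter than `m`. -/
theorem IsHoleSeq.adj_two (hd : IsHoleSeq G m d) (hmin : ∀ n e, IsHoleSeq G n e → m ≤ n)
    (hK3 : G.CliqueFree 3) (hu : ∀ t < m, G.Adj (d t) u ↔ t = 1 ∨ t = m - 1) (huv : G.Adj u v)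
    (hv : ∀ t < m, d t ≠ v) {e : ℕ} (he : G.Adj (d e) v) (he2 : 2 ≤ e) (hem : e + 3 ≤ m) :
    G.Adj (d 2) v := by
  induction e using Nat.strong_induction_on with
  | _ e ih =>
  by_cases hmid : ∃ r, 2 ≤ r ∧ r < e ∧ G.Adj (d r) v
  · obtain ⟨r, h2r, hre, hr⟩ := hmid
    exact ih r hre hr h2r (by omega)
  push Not at hmid
  rcases (show e = 2 ∨ 3 ≤ e by omega) with rfl | he3
  · exact he
  have hv1 : ¬ G.Adj (d 1) v :=
    not_adj_of_cliqueFree_three hK3 ((hu 1 (by omega)).2 (Or.inl rfl)).symm huv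
  have hpath : ∀ t ≤ e - 1, G.Adj (d (1 + t)) v ↔ t = e - 1 := by
    intro t ht
    rcases (show t = 0 ∨ t = e - 1 ∨ (0 < t ∧ t < e - 1) by omega) with rfl | rfl | ⟨h0, h1⟩
    · exact iff_of_false hv1 (by omega)
    · exact iff_of_true (by rwa [show 1 + (e - 1) = e by omega]) rfl
    · exact iff_of_false (hmid _ (by omega) (by omega)) (by omega)
  set w := Function.update (fun t => d (1 + t)) (e - 1 + 1) v
  have hclose : ∀ t ≤ e - 1 + 1, G.Adj (w t) u ↔ t = 0 ∨ t = e - 1 + 1 := by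
    intro t ht
    rcases (show t = e - 1 + 1 ∨ t < e - 1 + 1 by omega) with rfl | ht'
    · exact iff_of_true (by simpa [w] using huv.symm) (Or.inr rfl)
    · rw [show w t = d (1 + t) from Function.update_of_ne (by omega) _ _, hu _ (by omega)]
      omega
  have hne : ∀ t ≤ e - 1 + 1, w t ≠ u := by
    intro t ht
    rcases (show t = e - 1 + 1 ∨ t < e - 1 + 1 by omega) with rfl | ht'
    · simpa [w] using huv.ne.symm
    · rw [show w t = d (1 + t) from Function.update_of_ne (by omega) _ _]
      intro h
      have := hd.eq_zero_of_apply_eq hu (by omega) h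
      omega
  have := hmin _ _ (((hd.isInducedPath (a := 1) (L := e - 1) (by omega) (by omega)).update hpath
    fun t _ => hv _ (by omega)).isHoleSeq_update (by omega) hclose hne)
  omega

theorem IsHoleSeq.adj_sub_two (hd : IsHoleSeq G m d) (hmin : ∀ n e, IsHoleSeq G n e → m ≤ n)
    (hK3 : G.CliqueFree 3) (hu : ∀ t < m, G.Adj (d t) u ↔ t = 1 ∨ t = m - 1) (huv : G.Adj u v)
    (hv : ∀ t < m, d t ≠ v) {e : ℕ} (he : G.Adj (d e) v) (he3 : 3 ≤ e) (hem : e + 2 ≤ m) :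
    G.Adj (d (m - 2)) v := by
  have hu' : ∀ t < m, G.Adj (d (if t = 0 then 0 else m - t)) u ↔ t = 1 ∨ t = m - 1 := by
    intro t ht
    rw [hu _ (by split_ifs <;> omega)]
    split_ifs <;> (try simp only [false_or]) <;> omega
  have := hd.reflect.adj_two hmin hK3 hu' huv (fun t _ => hv _ (by split_ifs <;> omega)) (e := m - e)
    (by rwa [if_neg (by omega), show m - (m - e) = e by omega]) (by omega) (by omega)
  simpa using this

theorem IsHoleSeq.not_adj_sub_two_of_adj_two (hd : IsHoleSeq G m d)
    (hmin : ∀ n e, IsHoleSeq G n e → m ≤ n) (hK3 : G.CliqueFree 3)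
    (hX3 : ¬ ContainsInduced graphX3 G) (hm : 8 ≤ m)
    (hu : ∀ t < m, G.Adj (d t) u ↔ t = 1 ∨ t = m - 1) (huv : G.Adj u v) (hv : ∀ t < m, d t ≠ v)
    (h2 : G.Adj (d 2) v) : ¬ G.Adj (d (m - 2)) v := by
  intro hm2
  have h4 := hd.adj_add_two hmin hK3 hv h2 hm2 (by omega) (by omega) (by omega)
  have h6 := hd.adj_add_two hmin hK3 hv h4 hm2 (by omega) (by omega) (by omega)
  have hnext {t : ℕ} (ht : t + 1 < m) (h : G.Adj (d t) v) : ¬ G.Adj (d (t + 1)) v := fun h' =>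
    not_adj_of_cliqueFree_three hK3 h.symm h'.symm ((hd.adj_iff (by omega) ht).2 (by omega))
  have h3 := hnext (by omega) h2
  have h5 := hnext (by omega) h4
  apply hX3
  refine containsInduced_graphX3 (v₀ := d 2) (v₁ := d 3) (v₂ := d 4) (v₃ := d 5) (v₄ := d 6)
    (v₅ := v) (v₆ := u) ?_ ?_ ?_ ?_ h2 h4 h6 huv.symm ?_ ?_ ?_ ?_ ?_ ?_ h3 ?_ ?_ ?_ h5 ?_ ?_
  all_goals first
    | (rw [hu] <;> omega)
    | (rw [hd.adj_iff] <;> omega)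

/-- The pendant `v` at `u` would complete an induced `X₂` around the 4-cycle `d (m-1), u, d 1, d 0`. -/
theorem IsHoleSeq.adj_zero_or_adj_two_or_adj_sub_two (hd : IsHoleSeq G m d)
    (hK3 : G.CliqueFree 3) (hX2 : ¬ ContainsInduced graphX2 G) (hm : 6 ≤ m)
    (hu : ∀ t < m, G.Adj (d t) u ↔ t = 1 ∨ t = m - 1) (huv : G.Adj u v) :
    G.Adj (d 0) v ∨ G.Adj (d 2) v ∨ G.Adj (d (m - 2)) v := by
  by_contra! h
  obtain ⟨h0, h2, hm2⟩ := h
  have h1 : ¬ G.Adj (d 1) v :=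
    not_adj_of_cliqueFree_three hK3 ((hu 1 (by omega)).2 (Or.inl rfl)).symm huv
  have hm1 : ¬ G.Adj (d (m - 1)) v :=
    not_adj_of_cliqueFree_three hK3 ((hu (m - 1) (by omega)).2 (Or.inr rfl)).symm huv
  apply hX2
  refine containsInduced_graphX2 (v₀ := d (m - 1)) (v₁ := u) (v₂ := d 1) (v₃ := d 0)
    (v₄ := d (m - 2)) (v₅ := v) (v₆ := d 2) ?_ ?_ ?_ ?_ ?_ huv ?_ ?_ hm1 ?_ ?_ ?_ ?_ ?_ h1 ?_ h0 ?_
    hm2 ?_ (fun h => h2 h.symm)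
  all_goals first
    | (rw [hu] <;> omega)
    | (rw [G.adj_comm, hu] <;> omega)
    | (rw [hd.adj_iff] <;> omega)

/-- The pendant `w` at `d 0` would complete an induced `X₂` around the 4-cycle
`d (m-1), d 0, d 1, u`. -/
theorem IsHoleSeq.adj_of_adj_iff_eq_zero (hd : IsHoleSeq G m d)
    (hX2 : ¬ ContainsInduced graphX2 G) (hm : 6 ≤ m)
    (hu : ∀ t < m, G.Adj (d t) u ↔ t = 1 ∨ t = m - 1) {w : V}
    (hw : ∀ t < m, G.Adj (d t) w ↔ t = 0) : G.Adj u w := by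
  by_contra huw
  apply hX2
  refine containsInduced_graphX2 (v₀ := d (m - 1)) (v₁ := d 0) (v₂ := d 1) (v₃ := u)
    (v₄ := d (m - 2)) (v₅ := w) (v₆ := d 2) ?_ ?_ ?_ ?_ ?_ ?_ ?_ ?_ ?_ ?_ ?_ ?_ ?_ ?_ ?_ ?_ huw ?_
    ?_ ?_ ?_
  all_goals first
    | (rw [hu] <;> omega)
    | (rw [G.adj_comm, hu] <;> omega)
    | (rw [hw] <;> omega)
    | (rw [G.adj_comm, hw] <;> omega)
    | (rw [hd.adj_iff] <;> omega)

theorem IsHoleSeq.eq_zero_or_eq_two_or_eq_sub_two_of_adj (hd : IsHoleSeq G m d)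
    (hmin : ∀ n e, IsHoleSeq G n e → m ≤ n) (hK3 : G.CliqueFree 3)
    (hX3 : ¬ ContainsInduced graphX3 G) (hm : 8 ≤ m)
    (hu : ∀ t < m, G.Adj (d t) u ↔ t = 1 ∨ t = m - 1) (huv : G.Adj u v) (hv : ∀ t < m, d t ≠ v)
    {t : ℕ} (ht : t < m) (h : G.Adj (d t) v) : t = 0 ∨ t = 2 ∨ t = m - 2 := by
  by_contra hne
  have hu1 : t ≠ 1 ∧ t ≠ m - 1 := by
    constructor <;> rintro rfl <;>
      exact not_adj_of_cliqueFree_three hK3 ((hu _ ht).2 (by omega)).symm huv h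
  exact hd.not_adj_sub_two_of_adj_two hmin hK3 hX3 hm hu huv hv
    (hd.adj_two hmin hK3 hu huv hv h (by omega) (by omega))
    (hd.adj_sub_two hmin hK3 hu huv hv h (by omega) (by omega))

end ShortestHoleSeq

section Blocks

variable {V : Type*} {G : SimpleGraph V} {m : ℕ} {c : ZMod m → V} {u v : V}

theorem ZMod.natCast_self_sub {n k : ℕ} (hk : k ≤ n) : ((n - k : ℕ) : ZMod n) = -k := by
  rw [Nat.cast_sub hk, ZMod.natCast_self, zero_sub]

theorem neighborSet_inter_range_eq_image_iff {ι : Type*} {f : ι → V} (hf : Function.Injective f)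
    {S : Set ι} : G.neighborSet v ∩ Set.range f = f '' S ↔ ∀ x, G.Adj (f x) v ↔ x ∈ S := by
  constructor
  · intro h x
    rw [← hf.mem_set_image, ← h, G.adj_comm]
    simp
  · intro h
    ext y
    constructor
    · rintro ⟨hy, x, rfl⟩
      exact ⟨x, (h x).1 hy.symm, rfl⟩
    · rintro ⟨x, hx, rfl⟩
      exact ⟨((h x).2 hx).symm, x, rfl⟩

theorem mem_Ai_iff (hc : Function.Injective c) {j : ZMod m} :
    v ∈ Ai G m c j ↔ ∀ x, G.Adj (c x) v ↔ x = j - 1 ∨ x = j + 1 := by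
  rw [Ai, Set.mem_ofPred_eq, ← Set.image_pair, neighborSet_inter_range_eq_image_iff hc]
  simp only [Set.mem_insert_iff, Set.mem_singleton_iff]

theorem mem_Bi_iff (hc : Function.Injective c) {j : ZMod m} :
    v ∈ Bi G m c j ↔ ∀ x, G.Adj (c x) v ↔ x = j := by
  rw [Bi, Set.mem_ofPred_eq, ← Set.image_singleton, neighborSet_inter_range_eq_image_iff hc]
  simp only [Set.mem_singleton_iff]

theorem IsHoleEmb.mem_Ai (h : IsHoleEmb G m c) (x : ZMod m) : c x ∈ Ai G m c x :=
  (mem_Ai_iff h.2.1).2 fun y => by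
    rw [h.2.2, eq_sub_iff_add_eq, eq_comm (a := y + 1)]

theorem adj_add_natCast_iff_of_mem_Ai (hc : Function.Injective c) (hm : 2 ≤ m) {j : ZMod m}
    (hu : u ∈ Ai G m c j) {t : ℕ} (ht : t < m) : G.Adj (c (j + t)) u ↔ t = 1 ∨ t = m - 1 := by
  rw [(mem_Ai_iff hc).1 hu, sub_eq_add_neg, ← Nat.cast_one (R := ZMod m),
    ← ZMod.natCast_self_sub (by omega), ZMod.add_natCast_eq_add_natCast_iff j ht (by omega),
    ZMod.add_natCast_eq_add_natCast_iff j ht (by omega)]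
  exact or_comm

theorem adj_add_natCast_iff_of_mem_Bi (hc : Function.Injective c) (hm : 1 ≤ m) {j : ZMod m}
    (hw : v ∈ Bi G m c j) {t : ℕ} (ht : t < m) : G.Adj (c (j + t)) v ↔ t = 0 := by
  rw [(mem_Bi_iff hc).1 hw]
  simpa using ZMod.add_natCast_eq_add_natCast_iff j ht (show 0 < m by omega)

theorem mem_blocks_of_forall_adj (hc : Function.Injective c) {j : ZMod m}
    (h1 : ∀ x, G.Adj (c x) v → x = j ∨ x = j + 2 ∨ x = j - 2)
    (h2 : G.Adj (c (j + 2)) v → ¬ G.Adj (c (j - 2)) v)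
    (h3 : G.Adj (c j) v ∨ G.Adj (c (j + 2)) v ∨ G.Adj (c (j - 2)) v) :
    v ∈ Bi G m c (j - 2) ∨ v ∈ Ai G m c (j - 1) ∨ v ∈ Bi G m c j ∨ v ∈ Ai G m c (j + 1) ∨
      v ∈ Bi G m c (j + 2) := by
  have hadj : ∀ x, G.Adj (c x) v ↔ (x = j ∧ G.Adj (c j) v) ∨ (x = j + 2 ∧ G.Adj (c (j + 2)) v) ∨
      (x = j - 2 ∧ G.Adj (c (j - 2)) v) := by
    intro x
    constructor
    · intro hx
      rcases h1 x hx with rfl | rfl | rfl <;> simp [hx]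
    · rintro (⟨rfl, h⟩ | ⟨rfl, h⟩ | ⟨rfl, h⟩) <;> exact h
  simp only [mem_Ai_iff hc, mem_Bi_iff hc, show j - 1 - 1 = j - 2 by ring,
    show j - 1 + 1 = j by ring, show j + 1 - 1 = j by ring, show j + 1 + 1 = j + 2 by ring]
  by_cases ha : G.Adj (c j) v <;> by_cases hb : G.Adj (c (j + 2)) v <;>
    by_cases hb' : G.Adj (c (j - 2)) v <;> simp only [ha, hb, hb', and_true, and_false, or_false,
      false_or, not_true_eq_false, imp_false, true_imp_iff] at hadj h2 h3 <;> simp [hadj, or_comm]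

theorem mem_blocks_of_adj_add_natCast (hc : Function.Injective c) (hm : 2 ≤ m) {j : ZMod m}
    (h1 : ∀ t < m, G.Adj (c (j + t)) v → t = 0 ∨ t = 2 ∨ t = m - 2)
    (h2 : G.Adj (c (j + (2 : ℕ))) v → ¬ G.Adj (c (j + (m - 2 : ℕ))) v)
    (h3 : G.Adj (c (j + (0 : ℕ))) v ∨ G.Adj (c (j + (2 : ℕ))) v ∨
      G.Adj (c (j + (m - 2 : ℕ))) v) :
    v ∈ Bi G m c (j - 2) ∨ v ∈ Ai G m c (j - 1) ∨ v ∈ Bi G m c j ∨ v ∈ Ai G m c (j + 1) ∨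
      v ∈ Bi G m c (j + 2) := by
  have : NeZero m := ⟨by omega⟩
  simp only [Nat.cast_zero, add_zero, Nat.cast_ofNat, ZMod.natCast_self_sub hm,
    ← sub_eq_add_neg] at h2 h3
  refine mem_blocks_of_forall_adj hc (fun x hx => ?_) h2 h3
  obtain ⟨t, ht, rfl⟩ : ∃ t < m, x = j + t :=
    ⟨(x - j).val, ZMod.val_lt _, by rw [ZMod.natCast_zmod_val, add_sub_cancel]⟩
  rcases h1 t ht hx with rfl | rfl | rfl <;> simp [ZMod.natCast_self_sub hm, sub_eq_add_neg]

theorem mem_Bblk_of_mem (i : ℤ)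
    (h : v ∈ Bi G m c ((i : ZMod m) - 2) ∨ v ∈ Ai G m c ((i : ZMod m) - 1) ∨
      v ∈ Bi G m c (i : ZMod m) ∨ v ∈ Ai G m c ((i : ZMod m) + 1) ∨
      v ∈ Bi G m c ((i : ZMod m) + 2)) :
    v ∈ Bblk G m c (i - 2) (i + 2) := by
  rcases h with h | h | h | h | h
  · exact ⟨i - 2, le_rfl, by omega, Or.inl ⟨⟨0, by ring⟩, by push_cast; exact h⟩⟩
  · exact ⟨i - 1, by omega, by omega, Or.inr ⟨⟨0, by ring⟩, by push_cast; exact h⟩⟩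
  · exact ⟨i, by omega, by omega, Or.inl ⟨⟨1, by ring⟩, h⟩⟩
  · exact ⟨i + 1, by omega, by omega, Or.inr ⟨⟨1, by ring⟩, by push_cast; exact h⟩⟩
  · exact ⟨i + 2, by omega, le_rfl, Or.inl ⟨⟨2, by ring⟩, by push_cast; exact h⟩⟩

end Blocks

theorem Ai_neighborhood_containment_general {V : Type*} (G : SimpleGraph V) (hG : AlmostBPG G)
    (m : ℕ) (c : ZMod m → V) (hm : 10 ≤ m) (hC : ShortestHole G m c) :
    ∀ i : ℕ, i < m → ∀ u ∈ Ai G m c (i : ZMod m),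
      Bi G m c (i : ZMod m) ⊆ G.neighborSet u ∧
        G.neighborSet u ⊆ Bblk G m c ((i : ℤ) - 2) ((i : ℤ) + 2) := by
  intro i _ u hu
  obtain ⟨hK3, -, hX2, hX3, -⟩ := hG
  replace hK3 := cliqueFree_three_of_not_containsInduced hK3
  have hc := hC.1.2.1
  have hd := hC.1.isHoleSeq_add (i : ZMod m)
  have hmin : ∀ n e, IsHoleSeq G n e → m ≤ n := fun n e he => hC.2 n _ he.isHoleEmb
  have hud := fun t => adj_add_natCast_iff_of_mem_Ai (t := t) hc (by omega) hu
  refine ⟨fun w hw => hd.adj_of_adj_iff_eq_zero hX2 (by omega) hud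
    fun t => adj_add_natCast_iff_of_mem_Bi hc (by omega) hw, fun v huv => ?_⟩
  apply mem_Bblk_of_mem
  rw [Int.cast_natCast]
  by_cases hvC : v ∈ Set.range c
  · obtain ⟨x, rfl⟩ := hvC
    rcases ((mem_Ai_iff hc).1 hu x).1 huv.symm with rfl | rfl
    · exact Or.inr (Or.inl (hC.1.mem_Ai _))
    · exact Or.inr (Or.inr (Or.inr (Or.inl (hC.1.mem_Ai _))))
  have hv : ∀ t < m, c (i + t) ≠ v := fun t _ h => hvC ⟨_, h⟩
  exact mem_blocks_of_adj_add_natCast hc (by omega)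
    (fun t => hd.eq_zero_or_eq_two_or_eq_sub_two_of_adj hmin hK3 hX3 (by omega) hud huv hv)
    (hd.not_adj_sub_two_of_adj_two hmin hK3 hX3 (by omega) hud huv hv)
    (hd.adj_zero_or_adj_two_or_adj_sub_two hK3 hX2 (by omega) hud huv)

theorem Ai_neighborhood_containment {V : Type*} (G : SimpleGraph V) (hconn : G.Connected) (hG : AlmostBPG G)
    (m : ℕ) (c : ZMod m → V) (hm : 10 ≤ m) (hC : ShortestHole G m c) :
    ∀ i : ℕ, i < m → ∀ u ∈ Ai G m c (i : ZMod m),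
      Bi G m c (i : ZMod m) ⊆ G.neighborSet u ∧
        G.neighborSet u ⊆ Bblk G m c ((i : ℤ) - 2) ((i : ℤ) + 2) :=
  Ai_neighborhood_containment_general G hG m c hm hC
end
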